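/- arXiv:1903.04338 — 9 statements merged into one kernel-verified Lean document; each statement's English description precedes it below -/
import Mathlib

section
/- Let α > 0 and M ≥ 1 be real numbers, let Γ ⊆ [0, M] be a set of real numbers satisfying the DCC, and let Γ'' ⊆ ℝ be a topologically closed set satisfying the ACC. Then there exist a finite set Γ' contained in the closure of Γ and a function g from the closure of Γ to ℝ whose image is contained in Γ' and which satisfies g(x) = x for every x ∈ Γ' (so g ∘ g = g on the closure of Γ), such that: (1) γ ≤ g(γ) ≤ γ + α for every γ ∈ Γ; (2) if γ, γ' ∈ Γ and γ ≤ γ', then g(γ) ≤ g(γ'); (3) for every β ∈ Γ'' and every γ ∈ Γ, if β ≥ γ then β ≥ g(γ). -/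
/-!
The closure `D` of the DCC set `Γ` is compact and, like `Γ`, has a gap to the right of each of
its points. Dually, the ACC set `Γ''` has a gap `(a c, c)` to the left of each point `c`, which
we may take of length at most `α`. Finitely many intervals `(a c, c]` with `c ∈ D` cover `D`,
and `g` rounds up to the nearest of these finitely many `c`: it moves points by less than `α`,
and it cannot jump over a point of `Γ''` since `(a c, c)` misses `Γ''`.
-/

open Set

namespace Set

variable {α : Type*} [LinearOrder α] {s : Set α} {x : α}

theorem IsWF.exists_disjoint_Ioo_right (hs : s.IsWF) {u : α} (hxu : x < u) :
    ∃ b ∈ Ioc x u, Disjoint s (Ioo x b) := by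
  by_cases hne : (s ∩ Ioo x u).Nonempty
  · have hwf : (s ∩ Ioo x u).IsWF := hs.mono inter_subset_left
    have hmin := hwf.min_mem hne
    refine ⟨hwf.min hne, ⟨hmin.2.1, hmin.2.2.le⟩, disjoint_left.2 fun y hys hy => ?_⟩
    exact hwf.not_lt_min hne ⟨hys, hy.1, hy.2.trans hmin.2.2⟩ hy.2
  · exact ⟨u, ⟨hxu, le_rfl⟩, disjoint_left.2 fun y hys hy => hne ⟨y, hys, hy⟩⟩

theorem WellFoundedOn.exists_disjoint_Ioo_left (hs : s.WellFoundedOn (· > ·)) {ℓ : α}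
    (hℓx : ℓ < x) : ∃ a ∈ Ico ℓ x, Disjoint s (Ioo a x) := by
  obtain ⟨a, ⟨hxa, haℓ⟩, hdisj⟩ :=
    IsWF.exists_disjoint_Ioo_right (s := OrderDual.ofDual ⁻¹' s) hs
      (x := OrderDual.toDual x) (u := OrderDual.toDual ℓ) hℓx
  refine ⟨OrderDual.ofDual a, ⟨haℓ, hxa⟩, ?_⟩
  exact disjoint_left.2 fun y hys hy =>
    disjoint_left.mp hdisj (show OrderDual.toDual y ∈ OrderDual.ofDual ⁻¹' s from hys) ⟨hy.2, hy.1⟩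

end Set

theorem IsCompact.exists_finset_forall_mem_Ioc {α : Type*} [LinearOrder α] [TopologicalSpace α]
    [OrderTopology α] {D : Set α} (hD : IsCompact D)
    (hgap : ∀ x ∈ D, ∃ b, x < b ∧ Disjoint D (Ioo x b)) (a : α → α) (ha : ∀ x ∈ D, a x < x) :
    ∃ t : Finset α, ↑t ⊆ D ∧ ∀ y ∈ D, ∃ c ∈ t, y ∈ Ioc (a c) c := by
  choose! b hxb hb using hgap
  obtain ⟨t, htD, hcov⟩ := hD.elim_nhds_subcover (fun x => Ioo (a x) (b x))
    (fun x hx => isOpen_Ioo.mem_nhds ⟨ha x hx, hxb x hx⟩)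
  refine ⟨t, htD, fun y hy => ?_⟩
  obtain ⟨c, hct, hyc⟩ := mem_iUnion₂.1 (hcov hy)
  refine ⟨c, hct, hyc.1, le_of_not_gt fun hcy => ?_⟩
  exact disjoint_left.1 (hb c (htD c hct)) hy ⟨hcy, hyc.2⟩

/-- `sInf ∅` is a junk value, so this is the least element of `t` above `x` only if one exists. -/
noncomputable def roundUp {α : Type*} [ConditionallyCompleteLinearOrder α] (t : Set α) (x : α) :
    α :=
  sInf (t ∩ Ici x)

section roundUp

variable {α : Type*} [ConditionallyCompleteLinearOrder α] {t : Set α} {x y c : α}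

theorem roundUp_mem (ht : t.Finite) (hx : (t ∩ Ici x).Nonempty) : roundUp t x ∈ t ∩ Ici x :=
  hx.csInf_mem (ht.subset inter_subset_left)

theorem roundUp_le (hc : c ∈ t) (hxc : x ≤ c) : roundUp t x ≤ c :=
  csInf_le (bddBelow_Ici.mono inter_subset_right) ⟨hc, hxc⟩

theorem roundUp_of_mem (hx : x ∈ t) : roundUp t x = x :=
  IsLeast.csInf_eq (s := t ∩ Ici x) ⟨⟨hx, le_rfl⟩, fun _ h => h.2⟩

theorem roundUp_mono (hxy : x ≤ y) (hy : (t ∩ Ici y).Nonempty) : roundUp t x ≤ roundUp t y :=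
  csInf_le_csInf (bddBelow_Ici.mono inter_subset_right) hy
    (inter_subset_inter_right _ (Ici_subset_Ici.2 hxy))

end roundUp

theorem stmt_0_general (α M : ℝ) (hα : 0 < α)
    (Γ : Set ℝ) (hΓsub : Γ ⊆ Set.Icc 0 M)
    (hΓdcc : ¬ ∃ f : ℕ → ℝ, StrictAnti f ∧ ∀ n, f n ∈ Γ)
    (Γ'' : Set ℝ)
    (hΓ''acc : ¬ ∃ f : ℕ → ℝ, StrictMono f ∧ ∀ n, f n ∈ Γ'') :
    ∃ (Γ' : Set ℝ) (g : ℝ → ℝ),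
      Γ'.Finite ∧ Γ' ⊆ closure Γ ∧
      (∀ x ∈ closure Γ, g x ∈ Γ') ∧
      (∀ x ∈ Γ', g x = x) ∧
      (∀ γ ∈ Γ, γ ≤ g γ ∧ g γ ≤ γ + α) ∧
      (∀ γ ∈ Γ, ∀ γ' ∈ Γ, γ ≤ γ' → g γ ≤ g γ') ∧
      (∀ β ∈ Γ'', ∀ γ ∈ Γ, γ ≤ β → g γ ≤ β) := by
  have hΓwf : Γ.IsWF := isWF_iff_no_descending_seq.2 fun f hf hfΓ => hΓdcc ⟨f, hf, hfΓ⟩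
  have hΓ''wf : Γ''.WellFoundedOn (· > ·) :=
    isWF_iff_no_descending_seq (α := ℝᵒᵈ).2 fun f hf hfΓ => hΓ''acc ⟨f, fun _ _ h => hf h, hfΓ⟩
  have hcompact : IsCompact (closure Γ) :=
    isCompact_Icc.of_isClosed_subset isClosed_closure (closure_minimal hΓsub isClosed_Icc)
  have hgap : ∀ x ∈ closure Γ, ∃ b, x < b ∧ Disjoint (closure Γ) (Ioo x b) := fun x _ => by
    obtain ⟨b, hb, hdisj⟩ := hΓwf.exists_disjoint_Ioo_right (lt_add_one x)
    exact ⟨b, hb.1, hdisj.closure_left isOpen_Ioo⟩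
  choose a ha hΓ''gap using fun x : ℝ => hΓ''wf.exists_disjoint_Ioo_left (sub_lt_self x hα)
  obtain ⟨t, htΓ, hcover⟩ := hcompact.exists_finset_forall_mem_Ioc hgap a fun x _ => (ha x).2
  have hround : ∀ y ∈ closure Γ, roundUp t y ∈ (t : Set ℝ) ∩ Ici y := fun y hy => by
    obtain ⟨c, hct, -, hyc⟩ := hcover y hy
    exact roundUp_mem t.finite_toSet ⟨c, hct, hyc⟩
  refine ⟨t, roundUp t, t.finite_toSet, htΓ, fun x hx => (hround x hx).1,
    fun x hx => roundUp_of_mem hx, fun γ hγ => ⟨(hround γ (subset_closure hγ)).2, ?_⟩,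
    fun γ _ γ' hγ' hγγ' => roundUp_mono hγγ' ⟨_, hround γ' (subset_closure hγ')⟩, ?_⟩
  · obtain ⟨c, hct, hac, hγc⟩ := hcover γ (subset_closure hγ)
    linarith [roundUp_le hct hγc, (ha c).1]
  · intro β hβ γ hγ hγβ
    obtain ⟨c, hct, hac, hγc⟩ := hcover γ (subset_closure hγ)
    refine (roundUp_le hct hγc).trans (le_of_not_gt fun hβc => ?_)
    exact disjoint_left.1 (hΓ''gap c) hβ ⟨hac.trans_le hγβ, hβc⟩

/-- ACC for minimal log discrepancies paper, Lemma 5.3 (`lem: accdcc projection`):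
Given `α > 0`, `M ≥ 1`, a DCC set `Γ ⊆ [0, M]`, and a closed ACC set `Γ''`, there are a
finite set `Γ' ⊆ closure Γ` and a projection `g : closure Γ → Γ'` with the stated
monotonicity and comparison properties. -/
theorem stmt_0 (α M : ℝ) (hα : 0 < α) (hM : 1 ≤ M)
    (Γ : Set ℝ) (hΓsub : Γ ⊆ Set.Icc 0 M)
    (hΓdcc : ¬ ∃ f : ℕ → ℝ, StrictAnti f ∧ ∀ n, f n ∈ Γ)
    (Γ'' : Set ℝ) (hΓ''closed : IsClosed Γ'')
    (hΓ''acc : ¬ ∃ f : ℕ → ℝ, StrictMono f ∧ ∀ n, f n ∈ Γ'') :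
    ∃ (Γ' : Set ℝ) (g : ℝ → ℝ),
      Γ'.Finite ∧ Γ' ⊆ closure Γ ∧
      (∀ x ∈ closure Γ, g x ∈ Γ') ∧
      (∀ x ∈ Γ', g x = x) ∧
      (∀ γ ∈ Γ, γ ≤ g γ ∧ g γ ≤ γ + α) ∧
      (∀ γ ∈ Γ, ∀ γ' ∈ Γ, γ ≤ γ' → g γ ≤ g γ') ∧
      (∀ β ∈ Γ'', ∀ γ ∈ Γ, γ ≤ β → g γ ≤ β) :=
  stmt_0_general α M hα Γ hΓsub hΓdcc Γ'' hΓ''acc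
end

section
/- Let n be a positive integer and let ‖·‖₁ and ‖·‖₂ be two norms on ℝⁿ. Then there exists a positive real number M such that for all nonzero vectors a, b ∈ ℝⁿ one has ‖ a/‖a‖₁ − b/‖b‖₁ ‖₁ ≤ M · ‖ a/‖a‖₂ − b/‖b‖₂ ‖₂. -/
/-!
On a finite-dimensional real space every seminorm is continuous, and a norm attains a positive
minimum on the compact unit sphere; hence any two norms are equivalent, `N₁ ≤ K N₂` and
`N₂ ≤ K' N₁`. Normalising is invariant under positive rescaling, so with `u = a / N₂ a` and
`v = b / N₂ b` the left-hand side only involves `u` and `v`, and for any norm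
`‖u/‖u‖ - v/‖v‖‖ ≤ 2‖u - v‖/‖u‖`. As `N₂ u = 1` forces `N₁ u ≥ 1/K'`, one can take `M = 2 K K'`.
-/

namespace Seminorm

theorem pos_of_ne_zero {E : Type*} [AddCommGroup E] [Module ℝ E] (p : Seminorm ℝ E)
    (hp : ∀ x, p x = 0 → x = 0) {x : E} (hx : x ≠ 0) : 0 < p x :=
  (apply_nonneg p x).lt_of_ne' fun h ↦ hx (hp x h)

section FiniteDimensional

variable {E : Type*} [AddCommGroup E] [Module ℝ E] [TopologicalSpace E] [IsTopologicalAddGroup E]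
  [ContinuousSMul ℝ E] [T2Space E] [FiniteDimensional ℝ E]

theorem continuous_of_finiteDimensional (p : Seminorm ℝ E) : Continuous p := by
  refine Seminorm.continuous_of_continuousAt_zero ?_
  let b := Module.finBasis ℝ E
  let bound : E → ℝ := fun x ↦ ∑ i, |b.equivFun x i| * p (b i)
  have hp_le : ∀ x, p x ≤ bound x := fun x ↦ calc
    p x = p (∑ i, b.equivFun x i • b i) := by rw [b.sum_equivFun]
    _ ≤ ∑ i, p (b.equivFun x i • b i) :=
      Finset.le_sum_of_subadditive p (map_zero p).le (map_add_le_add p) _ _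
    _ = bound x := by simp only [map_smul_eq_mul, Real.norm_eq_abs, bound]
  have hbound : Continuous bound := by
    have hcoord : Continuous b.equivFun :=
      LinearMap.continuous_of_finiteDimensional b.equivFun.toLinearMap
    fun_prop
  have hbound0 : bound 0 = 0 := by simp [bound]
  rw [ContinuousAt, map_zero]
  exact tendsto_of_tendsto_of_tendsto_of_le_of_le tendsto_const_nhds
    (hbound0 ▸ hbound.tendsto 0) (apply_nonneg p) hp_le

end FiniteDimensional

section NormedSpace

variable {E : Type*} [NormedAddCommGroup E] [NormedSpace ℝ E] [FiniteDimensional ℝ E]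

theorem exists_mul_norm_le_of_finiteDimensional (p : Seminorm ℝ E) (hp : ∀ x, p x = 0 → x = 0) :
    ∃ c, 0 < c ∧ ∀ x, c * ‖x‖ ≤ p x := by
  have hpos : ∀ x ∈ Metric.sphere (0 : E) 1, 0 < p x := fun x hx ↦
    p.pos_of_ne_zero hp (ne_zero_of_mem_unit_sphere ⟨x, hx⟩)
  obtain ⟨c, hc, hc_le⟩ := (isCompact_sphere (0 : E) 1).exists_forall_le'
    p.continuous_of_finiteDimensional.continuousOn hpos
  refine ⟨c, hc, fun x ↦ ?_⟩
  rcases eq_or_ne x 0 with rfl | hx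
  · simp
  have hx' : 0 < ‖x‖ := norm_pos_iff.mpr hx
  have hunit : ‖x‖⁻¹ • x ∈ Metric.sphere (0 : E) 1 := by
    simp [norm_smul, hx'.ne']
  have hc_unit := hc_le _ hunit
  rw [map_smul_eq_mul, norm_inv, norm_norm, inv_mul_eq_div, le_div_iff₀ hx'] at hc_unit
  linarith

theorem exists_le_mul_of_finiteDimensional (p q : Seminorm ℝ E) (hq : ∀ x, q x = 0 → x = 0) :
    ∃ K, 0 < K ∧ ∀ x, p x ≤ K * q x := by
  obtain ⟨C, hC, hpC⟩ := p.bound_of_continuous_normedSpace p.continuous_of_finiteDimensional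
  obtain ⟨c, hc, hqc⟩ := q.exists_mul_norm_le_of_finiteDimensional hq
  refine ⟨C / c, div_pos hC hc, fun x ↦ ?_⟩
  calc p x ≤ C * ‖x‖ := hpC x
    _ = C / c * (c * ‖x‖) := by field_simp
    _ ≤ C / c * q x := by gcongr; exact hqc x

end NormedSpace

section Normalize

variable {E : Type*} [AddCommGroup E] [Module ℝ E]

theorem inv_smul_self_smul_of_pos (p : Seminorm ℝ E) {t : ℝ} (ht : 0 < t) (x : E) :
    (p (t • x))⁻¹ • (t • x) = (p x)⁻¹ • x := by
  rw [map_smul_eq_mul, Real.norm_of_nonneg ht.le, smul_smul, mul_inv, mul_right_comm,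
    inv_mul_cancel₀ ht.ne', one_mul]

theorem map_inv_smul_sub_inv_smul_le (p : Seminorm ℝ E) {u v : E} (hu : 0 < p u) (hv : 0 < p v) :
    p ((p u)⁻¹ • u - (p v)⁻¹ • v) ≤ 2 * p (u - v) / p u := by
  have hdecomp : (p u)⁻¹ • u - (p v)⁻¹ • v
      = (p u)⁻¹ • ((u - v) + (p v - p u) • (p v)⁻¹ • v) := by
    have hcoef : (p u)⁻¹ * (p v - p u) * (p v)⁻¹ = (p u)⁻¹ - (p v)⁻¹ := by field_simp
    rw [smul_add, smul_smul, smul_smul, hcoef, sub_smul, smul_sub]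
    abel
  have hunit : p ((p v)⁻¹ • v) = 1 := by
    rw [map_smul_eq_mul, norm_inv, Real.norm_of_nonneg hv.le, inv_mul_cancel₀ hv.ne']
  calc p ((p u)⁻¹ • u - (p v)⁻¹ • v)
      ≤ (p u)⁻¹ * (p (u - v) + |p v - p u|) := by
        rw [hdecomp, map_smul_eq_mul, norm_inv, Real.norm_of_nonneg hu.le]
        gcongr
        refine (map_add_le_add p _ _).trans ?_
        rw [map_smul_eq_mul, hunit, mul_one, Real.norm_eq_abs]
    _ ≤ (p u)⁻¹ * (p (u - v) + p (u - v)) := by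
        gcongr
        rw [map_sub_rev]
        exact abs_sub_map_le_sub p v u
    _ = 2 * p (u - v) / p u := by ring

theorem map_inv_smul_sub_inv_smul_le_mul (p q : Seminorm ℝ E) (hp : ∀ x, p x = 0 → x = 0)
    (hq : ∀ x, q x = 0 → x = 0) {K K' : ℝ} (hpq : ∀ x, p x ≤ K * q x)
    (hqp : ∀ x, q x ≤ K' * p x) {a b : E} (ha : a ≠ 0) (hb : b ≠ 0) :
    p ((p a)⁻¹ • a - (p b)⁻¹ • b) ≤ 2 * K * K' * q ((q a)⁻¹ • a - (q b)⁻¹ • b) := by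
  have hqa := q.pos_of_ne_zero hq ha
  have hqb := q.pos_of_ne_zero hq hb
  set u := (q a)⁻¹ • a
  set v := (q b)⁻¹ • b
  have hu : u ≠ 0 := smul_ne_zero (inv_ne_zero hqa.ne') ha
  have hv : v ≠ 0 := smul_ne_zero (inv_ne_zero hqb.ne') hb
  have hpu := p.pos_of_ne_zero hp hu
  have hqu : q u = 1 := by
    rw [map_smul_eq_mul, norm_inv, Real.norm_of_nonneg hqa.le, inv_mul_cancel₀ hqa.ne']
  have hpu_inv : (p u)⁻¹ ≤ K' := by
    rw [inv_le_iff_one_le_mul₀ hpu, ← hqu]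
    exact hqp u
  rw [← p.inv_smul_self_smul_of_pos (inv_pos.mpr hqa) a,
    ← p.inv_smul_self_smul_of_pos (inv_pos.mpr hqb) b]
  calc p ((p u)⁻¹ • u - (p v)⁻¹ • v) ≤ 2 * p (u - v) / p u :=
        p.map_inv_smul_sub_inv_smul_le hpu (p.pos_of_ne_zero hp hv)
    _ = 2 * (p u)⁻¹ * p (u - v) := by ring
    _ ≤ 2 * K' * (K * q (u - v)) := by
        have hK' : 0 ≤ K' := (inv_pos.mpr hpu).le.trans hpu_inv
        gcongr
        exact hpq _
    _ = 2 * K * K' * q (u - v) := by ring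

end Normalize

end Seminorm

theorem stmt_6_general (n : ℕ)
    (N₁ N₂ : (Fin n → ℝ) → ℝ)
    (hN₁zero : ∀ x, N₁ x = 0 ↔ x = 0)
    (hN₁smul : ∀ (t : ℝ) (x : Fin n → ℝ), N₁ (t • x) = |t| * N₁ x)
    (hN₁add : ∀ x y, N₁ (x + y) ≤ N₁ x + N₁ y)
    (hN₂zero : ∀ x, N₂ x = 0 ↔ x = 0)
    (hN₂smul : ∀ (t : ℝ) (x : Fin n → ℝ), N₂ (t • x) = |t| * N₂ x)
    (hN₂add : ∀ x y, N₂ (x + y) ≤ N₂ x + N₂ y) :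
    ∃ M : ℝ, 0 < M ∧ ∀ a b : Fin n → ℝ, a ≠ 0 → b ≠ 0 →
      N₁ ((N₁ a)⁻¹ • a - (N₁ b)⁻¹ • b) ≤ M * N₂ ((N₂ a)⁻¹ • a - (N₂ b)⁻¹ • b) := by
  let p₁ : Seminorm ℝ (Fin n → ℝ) := .of N₁ hN₁add fun t x ↦ by rw [hN₁smul, Real.norm_eq_abs]
  let p₂ : Seminorm ℝ (Fin n → ℝ) := .of N₂ hN₂add fun t x ↦ by rw [hN₂smul, Real.norm_eq_abs]
  have hp₁ : ∀ x, p₁ x = 0 → x = 0 := fun x ↦ (hN₁zero x).mp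
  have hp₂ : ∀ x, p₂ x = 0 → x = 0 := fun x ↦ (hN₂zero x).mp
  obtain ⟨K, hK, hp₁₂⟩ := p₁.exists_le_mul_of_finiteDimensional p₂ hp₂
  obtain ⟨K', hK', hp₂₁⟩ := p₂.exists_le_mul_of_finiteDimensional p₁ hp₁
  exact ⟨2 * K * K', by positivity, fun a b ha hb ↦
    p₁.map_inv_smul_sub_inv_smul_le_mul p₂ hp₁ hp₂ hp₁₂ hp₂₁ ha hb⟩

/-- Lemma 6.6 (`lem: equivnorm`): for any two norms `N₁, N₂` on `ℝⁿ` there is `M > 0` such that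
`N₁(a/N₁(a) − b/N₁(b)) ≤ M · N₂(a/N₂(a) − b/N₂(b))` for all nonzero `a, b`. -/
theorem stmt_6 (n : ℕ) (hn : 0 < n)
    (N₁ N₂ : (Fin n → ℝ) → ℝ)
    (hN₁zero : ∀ x, N₁ x = 0 ↔ x = 0)
    (hN₁smul : ∀ (t : ℝ) (x : Fin n → ℝ), N₁ (t • x) = |t| * N₁ x)
    (hN₁add : ∀ x y, N₁ (x + y) ≤ N₁ x + N₁ y)
    (hN₂zero : ∀ x, N₂ x = 0 ↔ x = 0)
    (hN₂smul : ∀ (t : ℝ) (x : Fin n → ℝ), N₂ (t • x) = |t| * N₂ x)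
    (hN₂add : ∀ x y, N₂ (x + y) ≤ N₂ x + N₂ y) :
    ∃ M : ℝ, 0 < M ∧ ∀ a b : Fin n → ℝ, a ≠ 0 → b ≠ 0 →
      N₁ ((N₁ a)⁻¹ • a - (N₁ b)⁻¹ • b) ≤ M * N₂ ((N₂ a)⁻¹ • a - (N₂ b)⁻¹ • b) :=
  stmt_6_general n N₁ N₂ hN₁zero hN₁smul hN₁add hN₂zero hN₂smul hN₂add
end

section
/- Let p₀, l, s₀ be positive integers, k₀ a nonnegative integer, and ε₁ > 0 a real number. Let r₁, …, r_{s₀+k₀} be positive real numbers such that 1, r₁, …, r_{s₀+k₀} are linearly independent over ℚ, and let e' = (e₁, …, e_{s₀}) ∈ ℝ^{s₀} be a nonzero vector with all coordinates ≥ 0. Then there exist a positive integer n₀ and a point r' = (r₁', …, r_{s₀+k₀}') ∈ ℝ^{s₀+k₀} such that: (1) p₀ divides n₀; (2) n₀·rⱼ' ∈ l·ℤ for every 1 ≤ j ≤ s₀+k₀; (3) ‖r − r'‖∞ < ε₁/n₀, where r = (r₁, …, r_{s₀+k₀}); and (4) c ≠ d and ‖ (c − d)/‖c − d‖∞ − e'/‖e'‖∞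 ‖∞ < ε₁, where c = (r₁, …, r_{s₀}) and d = (r₁', …, r_{s₀}'). -/
/-!
The heart of the matter is Kronecker's theorem. If `1, α₁, …, αₘ` admit no integer relation,
expand `F(n) = ∏ⱼ cos²ᴹ(π(nαⱼ - tⱼ))` into characters `𝐞((κⱼ - M)(nαⱼ - tⱼ))`: every frequency
other than `κ = (M, …, M)` gives a geometric progression `n ↦ ζⁿ` with `ζ ≠ 1`, so the partial sums
of `F` equal `N (C(2M, M) / 4ᴹ)ᵐ` up to a bounded error. If no `n` put every `nαⱼ - tⱼ` within `η`
of an integer, each `F(n)` would be at most `cos(πη)²ᴹ`, which decays exponentially in `M`, while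
`(C(2M, M) / 4ᴹ)ᵐ` decays only polynomially.

Applied to `αⱼ = p₀ rⱼ / l` and the target `t = δ e / ‖e‖` (padded by zeros), it gives `n₀ = n p₀`
and `r'ⱼ = l zⱼ / n₀` for which `r - r'` is `l / n₀` times a vector within `η` of `t`; as `η ≪ δ`,
this controls both the size of `r - r'` and the direction of `c - d`.
-/

open Finset Real
open scoped FourierTransform

lemma norm_geom_sum_le {𝕜 : Type*} [NormedDivisionRing 𝕜] {z : 𝕜} (hz : ‖z‖ ≤ 1) (h1 : z ≠ 1)
    (N : ℕ) : ‖∑ n ∈ range N, z ^ n‖ ≤ 2 / ‖z - 1‖ := by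
  rw [geom_sum_eq h1, norm_div]
  gcongr
  calc ‖z ^ N - 1‖ ≤ ‖z‖ ^ N + ‖(1 : 𝕜)‖ := (norm_sub_le _ _).trans (by rw [norm_pow])
    _ ≤ 2 := by rw [norm_one]; linarith [pow_le_one₀ (norm_nonneg z) hz (n := N)]

lemma exists_forall_norm_sum_range_sum_pow_le {ι 𝕜 : Type*} [NormedDivisionRing 𝕜] (s : Finset ι)
    (a ζ : ι → 𝕜) (hζ : ∀ i ∈ s, ‖ζ i‖ ≤ 1 ∧ ζ i ≠ 1) :
    ∃ C, ∀ N, ‖∑ n ∈ range N, ∑ i ∈ s, a i * ζ i ^ n‖ ≤ C := by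
  refine ⟨∑ i ∈ s, ‖a i‖ * (2 / ‖ζ i - 1‖), fun N => ?_⟩
  rw [sum_comm]
  refine (norm_sum_le _ _).trans (sum_le_sum fun i hi => ?_)
  rw [← mul_sum, norm_mul]
  gcongr
  exact norm_geom_sum_le (hζ i hi).1 (hζ i hi).2 N

lemma Real.fourierChar_eq_one_iff {x : ℝ} : 𝐞 x = 1 ↔ ∃ z : ℤ, x = z := by
  rw [fourierChar_apply', Circle.exp_eq_one]
  refine exists_congr fun z => ?_
  constructor
  · intro h; nlinarith [pi_pos]
  · intro h; rw [h]; ring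

lemma ofReal_cos_pi_mul_pow_two_mul_eq_sum (M : ℕ) (θ : ℝ) :
    ((cos (π * θ) ^ (2 * M) : ℝ) : ℂ) =
      ∑ k ∈ range (2 * M + 1), (((2 * M).choose k / 4 ^ M : ℝ) : ℂ) * 𝐞 ((k - M : ℝ) * θ) := by
  have hcos : ((cos (π * θ) : ℝ) : ℂ) = (𝐞 (θ / 2) + 𝐞 (-(θ / 2))) / 2 := by
    rw [Complex.ofReal_cos, Complex.cos, fourierChar_apply, fourierChar_apply]
    congr 3 <;> push_cast <;> ring
  rw [Complex.ofReal_pow, hcos, div_pow, add_pow, sum_div]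
  refine sum_congr rfl fun k hk => ?_
  have hk : k ≤ 2 * M := Nat.lt_succ_iff.mp (mem_range.mp hk)
  have hterm : (𝐞 (θ / 2) : ℂ) ^ k * 𝐞 (-(θ / 2)) ^ (2 * M - k) = 𝐞 ((k - M : ℝ) * θ) := by
    have harg : k • (θ / 2) + (2 * M - k) • (-(θ / 2)) = (k - M : ℝ) * θ := by
      rw [nsmul_eq_mul, nsmul_eq_mul, Nat.cast_sub hk]; push_cast; ring
    rw [← harg, AddChar.map_add_eq_mul, AddChar.map_nsmul_eq_pow, AddChar.map_nsmul_eq_pow,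
      Circle.coe_mul, Circle.coe_pow, Circle.coe_pow]
  rw [hterm, show (2 : ℂ) ^ (2 * M) = 4 ^ M by rw [pow_mul]; norm_num]
  push_cast
  ring

lemma Real.coe_fourierChar_sum {ι : Type*} (s : Finset ι) (f : ι → ℝ) :
    (𝐞 (∑ i ∈ s, f i) : ℂ) = ∏ i ∈ s, (𝐞 (f i) : ℂ) := by
  induction s using Finset.cons_induction with
  | empty => rw [sum_empty, prod_empty, AddChar.map_zero_eq_one, Circle.coe_one]
  | cons a s ha ih => rw [sum_cons, prod_cons, AddChar.map_add_eq_mul, Circle.coe_mul, ih]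

lemma ofReal_prod_cos_pi_mul_pow_two_mul_eq_sum {ι : Type*} [Fintype ι] [DecidableEq ι] (M : ℕ)
    (θ : ι → ℝ) :
    ((∏ j, cos (π * θ j) ^ (2 * M) : ℝ) : ℂ) =
      ∑ κ ∈ Fintype.piFinset fun _ : ι => range (2 * M + 1),
        ((∏ j, (2 * M).choose (κ j) / 4 ^ M : ℝ) : ℂ) * 𝐞 (∑ j, (κ j - M : ℝ) * θ j) := by
  simp_rw [Complex.ofReal_prod, ofReal_cos_pi_mul_pow_two_mul_eq_sum, prod_univ_sum,
    prod_mul_distrib, Real.coe_fourierChar_sum]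

lemma cos_pi_mul_sq_le_of_forall_le_abs_sub_int {η θ : ℝ} (hη : 0 ≤ η)
    (hθ : ∀ z : ℤ, η ≤ |θ - z|) : cos (π * θ) ^ 2 ≤ cos (π * η) ^ 2 := by
  set d := θ - round θ
  have hd : |d| ≤ 1 / 2 := abs_sub_round θ
  have hηd : η ≤ |d| := hθ _
  have hcos : cos (2 * (π * θ)) = cos (2 * π * |d|) := by
    rw [show 2 * (π * θ) = 2 * π * d + round θ * (2 * π) by ring, cos_add_int_mul_two_pi,
      ← cos_abs, abs_mul, abs_of_pos two_pi_pos]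
  have hle : cos (2 * π * |d|) ≤ cos (2 * (π * η)) :=
    cos_le_cos_of_nonneg_of_le_pi (by positivity) (by nlinarith [pi_pos]) (by nlinarith [pi_pos])
  rw [cos_sq, cos_sq, hcos]
  linarith

lemma prod_cos_pi_mul_pow_le {ι : Type*} [Fintype ι] {θ : ι → ℝ} {η : ℝ} (hη : 0 ≤ η) {j : ι}
    (hj : ∀ z : ℤ, η ≤ |θ j - z|) (M : ℕ) :
    ∏ i, cos (π * θ i) ^ (2 * M) ≤ (cos (π * η) ^ 2) ^ M := by
  simp_rw [pow_mul]
  calc ∏ i, (cos (π * θ i) ^ 2) ^ M ≤ ∏ i ∈ {j}, (cos (π * θ i) ^ 2) ^ M :=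
        prod_le_prod_of_subset_of_le_one (subset_univ _) (fun i _ => by positivity)
          fun i _ _ => pow_le_one₀ (sq_nonneg _) (cos_sq_le_one _)
    _ ≤ _ := by
      rw [prod_singleton]
      exact pow_le_pow_left₀ (sq_nonneg _) (cos_pi_mul_sq_le_of_forall_le_abs_sub_int hη hj) M

lemma exists_pow_lt_centralBinom_div_four_pow_pow {ρ : ℝ} (hρ0 : 0 ≤ ρ) (hρ1 : ρ < 1) (m : ℕ) :
    ∃ M : ℕ, ρ ^ M < ((M.centralBinom : ℝ) / 4 ^ M) ^ m := by
  have hlim := tendsto_pow_const_mul_const_pow_of_abs_lt_one m (by rwa [abs_of_nonneg hρ0])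
  obtain ⟨M, hM, hM1⟩ := ((hlim.eventually (gt_mem_nhds (by positivity : (0 : ℝ) < 1 / 2 ^ m))).and
    (Filter.eventually_ge_atTop 1)).exists
  refine ⟨M, ?_⟩
  have hc : 1 / (2 * M : ℝ) ≤ M.centralBinom / 4 ^ M := by
    rw [div_le_div_iff₀ (by positivity) (by positivity), one_mul, mul_comm]
    exact_mod_cast Nat.four_pow_le_two_mul_self_mul_centralBinom M hM1
  calc ρ ^ M < (1 / (2 * M)) ^ m := by
        rw [div_pow, one_pow, lt_div_iff₀ (by positivity), mul_pow, mul_comm, mul_assoc]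
        rw [lt_div_iff₀ (by positivity)] at hM
        linarith
    _ ≤ _ := pow_le_pow_left₀ (by positivity) hc m

def IntIndependentWithOne {ι : Type*} [Fintype ι] (α : ι → ℝ) : Prop :=
  ∀ (k : ι → ℤ) (z : ℤ), ∑ j, k j * α j = z → k = 0

lemma intIndependentWithOne_rat_mul {ι : Type*} [Fintype ι] {r : ι → ℝ}
    (hr : ∀ (q₀ : ℚ) (q : ι → ℚ), (q₀ : ℝ) + ∑ i, (q i : ℝ) * r i = 0 → q₀ = 0 ∧ ∀ i, q i = 0)
    {c : ℚ} (hc : c ≠ 0) : IntIndependentWithOne fun j => (c : ℝ) * r j := by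
  intro k z h
  have hq := (hr (-z) (fun i => k i * c) (by push_cast; simp_rw [mul_assoc]; rw [h]; ring)).2
  funext i
  simpa [hc] using hq i

section Kronecker

variable {ι : Type*} [Fintype ι] {α : ι → ℝ}

lemma fourierChar_sum_sub_mul_ne_one (hα : IntIndependentWithOne α)
    {M : ℕ} {κ : ι → ℕ} (hκ : κ ≠ fun _ => M) : 𝐞 (∑ j, (κ j - M : ℝ) * α j) ≠ 1 := by
  rw [Ne, Real.fourierChar_eq_one_iff]
  rintro ⟨z, hz⟩
  refine hκ (funext fun j => ?_)
  have := congrFun (hα (fun j => κ j - M) z (by push_cast; exact hz)) j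
  simp only [Pi.zero_apply, sub_eq_zero] at this
  exact_mod_cast this

lemma ofReal_prod_cos_pi_mul_sub_pow_eq_sum [DecidableEq ι] (t : ι → ℝ) (M n : ℕ) :
    ((∏ j, cos (π * (n * α j - t j)) ^ (2 * M) : ℝ) : ℂ) =
      ∑ κ ∈ Fintype.piFinset fun _ : ι => range (2 * M + 1),
        ((∏ j, (2 * M).choose (κ j) / 4 ^ M : ℝ) : ℂ) * 𝐞 (-∑ j, (κ j - M : ℝ) * t j) *
          (𝐞 (∑ j, (κ j - M : ℝ) * α j) : ℂ) ^ n := by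
  rw [ofReal_prod_cos_pi_mul_pow_two_mul_eq_sum]
  refine sum_congr rfl fun κ _ => ?_
  have harg : ∑ j, (κ j - M : ℝ) * (n * α j - t j) =
      -∑ j, (κ j - M : ℝ) * t j + n • ∑ j, (κ j - M : ℝ) * α j := by
    rw [nsmul_eq_mul, mul_sum, ← sum_neg_distrib, ← sum_add_distrib]
    exact sum_congr rfl fun j _ => by ring
  rw [harg, AddChar.map_add_eq_mul, AddChar.map_nsmul_eq_pow, Circle.coe_mul, Circle.coe_pow,
    mul_assoc]

lemma exists_forall_le_sum_range_prod_cos_pow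
    (hα : IntIndependentWithOne α) (t : ι → ℝ) (M : ℕ) :
    ∃ C, ∀ N : ℕ, N * ((M.centralBinom : ℝ) / 4 ^ M) ^ Fintype.card ι - C ≤
      ∑ n ∈ range N, ∏ j, cos (π * (n * α j - t j)) ^ (2 * M) := by
  classical
  set c : ℝ := ((M.centralBinom : ℝ) / 4 ^ M) ^ Fintype.card ι
  set Λ := Fintype.piFinset fun _ : ι => range (2 * M + 1)
  set κ₀ : ι → ℕ := fun _ => M
  set a : (ι → ℕ) → ℂ := fun κ =>
    ((∏ j, (2 * M).choose (κ j) / 4 ^ M : ℝ) : ℂ) * 𝐞 (-∑ j, (κ j - M : ℝ) * t j)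
  set ζ : (ι → ℕ) → ℂ := fun κ => 𝐞 (∑ j, (κ j - M : ℝ) * α j)
  have hκ₀ : κ₀ ∈ Λ := by simp [Λ, κ₀, Fintype.mem_piFinset]; omega
  have hc : ∀ n : ℕ, a κ₀ * ζ κ₀ ^ n = c := fun n => by
    simp [a, ζ, κ₀, c, Nat.centralBinom_eq_two_mul_choose, div_pow]
  obtain ⟨C, hC⟩ := exists_forall_norm_sum_range_sum_pow_le (Λ.erase κ₀) a ζ fun κ hκ =>
    ⟨(Circle.norm_coe _).le, by
      rw [Ne, Circle.coe_eq_one]; exact fourierChar_sum_sub_mul_ne_one hα (ne_of_mem_erase hκ)⟩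
  refine ⟨C, fun N => ?_⟩
  set S := ∑ n ∈ range N, ∏ j, cos (π * (n * α j - t j)) ^ (2 * M)
  have hsum : ((S - N * c : ℝ) : ℂ) = ∑ n ∈ range N, ∑ κ ∈ Λ.erase κ₀, a κ * ζ κ ^ n := by
    have hsplit : ∀ n : ℕ, ((∏ j, cos (π * (n * α j - t j)) ^ (2 * M) : ℝ) : ℂ) =
        c + ∑ κ ∈ Λ.erase κ₀, a κ * ζ κ ^ n := fun n => by
      rw [ofReal_prod_cos_pi_mul_sub_pow_eq_sum, ← hc n]
      exact (add_sum_erase Λ (fun κ => a κ * ζ κ ^ n) hκ₀).symm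
    simp only [S, Complex.ofReal_sub, Complex.ofReal_sum, hsplit, sum_add_distrib, sum_const,
      card_range, nsmul_eq_mul]
    push_cast
    ring
  have habs : |S - N * c| ≤ C := by
    rw [← Real.norm_eq_abs, ← Complex.norm_real, hsum]
    exact hC N
  linarith [neg_abs_le (S - N * c)]

theorem exists_nat_forall_abs_mul_sub_sub_lt
    (hα : IntIndependentWithOne α) (t : ι → ℝ) {η : ℝ} (hη : 0 < η) :
    ∃ n : ℕ, ∀ j, ∃ z : ℤ, |n * α j - z - t j| < η := by
  wlog hη1 : η < 1 generalizing η
  · obtain ⟨n, hn⟩ := this one_half_pos (by norm_num)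
    exact ⟨n, fun j => (hn j).imp fun z hz => hz.trans (by linarith)⟩
  by_contra! hbad
  set ρ := cos (π * η) ^ 2
  have hρ1 : ρ < 1 := by
    have := sin_pos_of_pos_of_lt_pi (by positivity) (by nlinarith [pi_pos] : π * η < π)
    rw [show ρ = 1 - sin (π * η) ^ 2 from cos_sq' _]
    nlinarith
  obtain ⟨M, hM⟩ := exists_pow_lt_centralBinom_div_four_pow_pow (sq_nonneg _) hρ1 (Fintype.card ι)
  obtain ⟨C, hC⟩ := exists_forall_le_sum_range_prod_cos_pow hα t M
  set c := ((M.centralBinom : ℝ) / 4 ^ M) ^ Fintype.card ι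
  obtain ⟨N, hN⟩ := exists_nat_gt (C / (c - ρ ^ M))
  have hupper : ∑ n ∈ range N, ∏ j, cos (π * (n * α j - t j)) ^ (2 * M) ≤ N * ρ ^ M := by
    calc _ ≤ ∑ n ∈ range N, ρ ^ M := sum_le_sum fun n _ => by
          obtain ⟨j, hj⟩ := hbad n
          exact prod_cos_pi_mul_pow_le hη.le (j := j) (fun z => by rw [sub_right_comm]; exact hj z) M
      _ = N * ρ ^ M := by simp
  rw [div_lt_iff₀ (sub_pos.2 hM)] at hN
  linarith [hC N]

theorem exists_pos_nat_forall_abs_mul_sub_sub_lt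
    (hα : IntIndependentWithOne α) (t : ι → ℝ) {η : ℝ} (hη : 0 < η) :
    ∃ n : ℕ, 0 < n ∧ ∀ j, ∃ z : ℤ, |n * α j - z - t j| < η := by
  obtain ⟨n, hn⟩ := exists_nat_forall_abs_mul_sub_sub_lt hα (t - α) hη
  refine ⟨n + 1, n.succ_pos, fun j => (hn j).imp fun z hz => ?_⟩
  convert hz using 2
  push_cast [Pi.sub_apply]
  ring

end Kronecker

lemma NormedSpace.norm_normalize_sub_normalize_le {V : Type*} [NormedAddCommGroup V]
    [NormedSpace ℝ V] (v : V) {w : V} (hw : w ≠ 0) :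
    ‖normalize v - normalize w‖ ≤ 2 * ‖v - w‖ / ‖w‖ := by
  have hw' : 0 < ‖w‖ := norm_pos_iff.2 hw
  rcases eq_or_ne v 0 with rfl | hv
  · rw [normalize_zero_eq_zero, zero_sub, norm_neg, norm_normalize hw, zero_sub, norm_neg,
      mul_div_assoc, div_self hw'.ne']
    norm_num
  have hv' : 0 < ‖v‖ := norm_pos_iff.2 hv
  have hsplit : normalize v - normalize w = ‖w‖⁻¹ • (v - w) + (‖v‖⁻¹ - ‖w‖⁻¹) • v := by
    simp only [normalize, smul_sub, sub_smul]
    abel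
  have hscale : |‖v‖⁻¹ - ‖w‖⁻¹| * ‖v‖ = |‖w‖ - ‖v‖| / ‖w‖ := by
    rw [← abs_of_pos hv', ← abs_mul, ← abs_of_pos hw', ← abs_div, abs_of_pos hv', abs_of_pos hw']
    congr 1
    field_simp
  calc ‖normalize v - normalize w‖ ≤ ‖w‖⁻¹ * ‖v - w‖ + |‖v‖⁻¹ - ‖w‖⁻¹| * ‖v‖ := by
        rw [hsplit]
        refine (norm_add_le _ _).trans_eq ?_
        rw [norm_smul, norm_smul, norm_inv, norm_norm, Real.norm_eq_abs]
    _ = (‖v - w‖ + |‖w‖ - ‖v‖|) / ‖w‖ := by rw [hscale, inv_mul_eq_div, add_div]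
    _ ≤ 2 * ‖v - w‖ / ‖w‖ := by
        gcongr
        linarith [abs_norm_sub_norm_le w v, norm_sub_rev w v]

lemma NormedSpace.norm_normalize_sub_normalize_lt {V : Type*} [NormedAddCommGroup V]
    [NormedSpace ℝ V] {v w : V} {ε : ℝ} (h : ‖v - w‖ < ε * ‖w‖ / 2) :
    ‖normalize v - normalize w‖ < ε := by
  have hw : 0 < ‖w‖ := norm_pos_iff.2 fun h0 => by
    simp only [h0, sub_zero, norm_zero, mul_zero, zero_div] at h
    exact (norm_nonneg v).not_gt h
  calc _ ≤ 2 * ‖v - w‖ / ‖w‖ := norm_normalize_sub_normalize_le v (norm_pos_iff.1 hw)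
    _ < ε := by rw [div_lt_iff₀ hw]; linarith

lemma norm_comp_castAdd_sub_le {E : Type*} [SeminormedAddCommGroup E] {m n : ℕ}
    (x : Fin (m + n) → E) (u : Fin m → E) (v : Fin n → E) :
    ‖x ∘ Fin.castAdd n - u‖ ≤ ‖x - Fin.append u v‖ := by
  have hrestrict : x ∘ Fin.castAdd n - u = (x - Fin.append u v) ∘ Fin.castAdd n := by
    ext i
    simp
  exact hrestrict ▸ pi_norm_comp_le _ _

lemma norm_append_zero_le {E : Type*} [SeminormedAddCommGroup E] {m n : ℕ} (u : Fin m → E) :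
    ‖Fin.append u (0 : Fin n → E)‖ ≤ ‖u‖ :=
  (pi_norm_le_iff_of_nonneg (norm_nonneg u)).2 fun j => Fin.addCases
    (fun i => by simpa only [Fin.append_left] using norm_le_pi_norm u i)
    (fun i => by simp only [Fin.append_right, Pi.zero_apply, norm_zero, norm_nonneg]) j

lemma exists_pos_dvd_norm_mul_div_sub_intCast_sub_lt {ι : Type*} [Fintype ι] {r : ι → ℝ}
    (hr : ∀ (q₀ : ℚ) (q : ι → ℚ), (q₀ : ℝ) + ∑ i, (q i : ℝ) * r i = 0 → q₀ = 0 ∧ ∀ i, q i = 0)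
    {p l : ℕ} (hp : 0 < p) (hl : 0 < l) (t : ι → ℝ) {η : ℝ} (hη : 0 < η) :
    ∃ n : ℕ, 0 < n ∧ p ∣ n ∧ ∃ z : ι → ℤ, ‖(fun j => n * r j / l - z j) - t‖ < η := by
  obtain ⟨n, hn, hz⟩ := exists_pos_nat_forall_abs_mul_sub_sub_lt
    (intIndependentWithOne_rat_mul hr (c := p / l) (by positivity)) t hη
  choose z hz using hz
  refine ⟨n * p, by positivity, dvd_mul_left _ _, z, (pi_norm_lt_iff hη).2 fun j => ?_⟩
  rw [Pi.sub_apply, Real.norm_eq_abs]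
  convert hz j using 4
  push_cast
  ring

theorem stmt_8_general (p₀ l s₀ k₀ : ℕ) (hp₀ : 0 < p₀) (hl : 0 < l)
    (ε₁ : ℝ) (hε₁ : 0 < ε₁)
    (r : Fin (s₀ + k₀) → ℝ)
    (hlin : ∀ (q₀ : ℚ) (q : Fin (s₀ + k₀) → ℚ),
      (q₀ : ℝ) + ∑ i, (q i : ℝ) * r i = 0 → q₀ = 0 ∧ ∀ i, q i = 0)
    (e : Fin s₀ → ℝ) (he0 : e ≠ 0) :
    ∃ (n₀ : ℕ) (r' : Fin (s₀ + k₀) → ℝ), 0 < n₀ ∧ p₀ ∣ n₀ ∧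
      (∀ j, ∃ z : ℤ, (n₀ : ℝ) * r' j = (l : ℝ) * (z : ℝ)) ∧
      ‖r - r'‖ < ε₁ / n₀ ∧
      (fun i : Fin s₀ => r (Fin.castAdd k₀ i)) ≠ (fun i : Fin s₀ => r' (Fin.castAdd k₀ i)) ∧
      ‖(‖(fun i : Fin s₀ => r (Fin.castAdd k₀ i)) -
            (fun i : Fin s₀ => r' (Fin.castAdd k₀ i))‖)⁻¹ •
          ((fun i : Fin s₀ => r (Fin.castAdd k₀ i)) -
            (fun i : Fin s₀ => r' (Fin.castAdd k₀ i))) -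
        ‖e‖⁻¹ • e‖ < ε₁ := by
  set δ := ε₁ / (2 * l)
  set η := min δ (ε₁ * δ / 2)
  have hδ : 0 < δ := by positivity
  have hη : 0 < η := lt_min hδ (by positivity)
  set w : Fin s₀ → ℝ := δ • NormedSpace.normalize e
  have hw : ‖w‖ = δ := by
    rw [norm_smul, NormedSpace.norm_normalize he0, Real.norm_of_nonneg hδ.le, mul_one]
  obtain ⟨n₀, hn₀, hdvd, z, hz⟩ :=
    exists_pos_dvd_norm_mul_div_sub_intCast_sub_lt hlin hp₀ hl (Fin.append w 0) hη
  set x : Fin (s₀ + k₀) → ℝ := fun j => n₀ * r j / l - z j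
  set r' : Fin (s₀ + k₀) → ℝ := fun j => l * z j / n₀
  have hn₀' : (0 : ℝ) < n₀ := by positivity
  have hr' : r - r' = (l / n₀ : ℝ) • x := by
    ext j
    simp only [x, r', Pi.sub_apply, Pi.smul_apply, smul_eq_mul]
    field_simp
  have hcd : (fun i => r (Fin.castAdd k₀ i)) - (fun i => r' (Fin.castAdd k₀ i)) =
      (l / n₀ : ℝ) • (x ∘ Fin.castAdd k₀) :=
    funext fun i => congrFun hr' (Fin.castAdd k₀ i)
  have hxw : ‖x ∘ Fin.castAdd k₀ - w‖ < η := (norm_comp_castAdd_sub_le x w 0).trans_lt hz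
  refine ⟨n₀, r', hn₀, hdvd, fun j => ⟨z j, mul_div_cancel₀ _ hn₀'.ne'⟩, ?_, ?_, ?_⟩
  · have hx : ‖x‖ < 2 * δ := by
      linarith [norm_le_norm_add_norm_sub' x (Fin.append w 0), norm_append_zero_le (n := k₀) w,
        min_le_left δ (ε₁ * δ / 2)]
    rw [hr', norm_smul, Real.norm_of_nonneg (by positivity)]
    calc l / n₀ * ‖x‖ < l / n₀ * (2 * δ) := by gcongr
      _ = ε₁ / n₀ := by
        rw [div_mul_eq_mul_div, show (l : ℝ) * (2 * δ) = ε₁ by simp only [δ]; field_simp]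
  · rw [Ne, ← sub_eq_zero, hcd, smul_eq_zero, not_or]
    refine ⟨by positivity, fun h => ?_⟩
    rw [h, zero_sub, norm_neg, hw] at hxw
    exact (min_le_left _ _).not_gt hxw
  · have hwe : NormedSpace.normalize w = NormedSpace.normalize e := by
      rw [NormedSpace.normalize_smul_of_pos hδ, NormedSpace.normalize_normalize]
    rw [hcd]
    change ‖NormedSpace.normalize _ - NormedSpace.normalize e‖ < ε₁
    rw [NormedSpace.normalize_smul_of_pos (by positivity), ← hwe]
    exact NormedSpace.norm_normalize_sub_normalize_lt (hw ▸ hxw.trans_le (min_le_right _ _))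

/-- Lemma 6.8 (`lem: linearindependentdiufantu`): simultaneous Diophantine approximation with
divisibility, integrality and anisotropy constraints. Here the norm on `Fin m → ℝ` is the
maximum norm. -/
theorem stmt_8 (p₀ l s₀ k₀ : ℕ) (hp₀ : 0 < p₀) (hl : 0 < l) (hs₀ : 0 < s₀)
    (ε₁ : ℝ) (hε₁ : 0 < ε₁)
    (r : Fin (s₀ + k₀) → ℝ) (hrpos : ∀ i, 0 < r i)
    (hlin : ∀ (q₀ : ℚ) (q : Fin (s₀ + k₀) → ℚ),
      (q₀ : ℝ) + ∑ i, (q i : ℝ) * r i = 0 → q₀ = 0 ∧ ∀ i, q i = 0)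
    (e : Fin s₀ → ℝ) (he : ∀ i, 0 ≤ e i) (he0 : e ≠ 0) :
    ∃ (n₀ : ℕ) (r' : Fin (s₀ + k₀) → ℝ), 0 < n₀ ∧ p₀ ∣ n₀ ∧
      (∀ j, ∃ z : ℤ, (n₀ : ℝ) * r' j = (l : ℝ) * (z : ℝ)) ∧
      ‖r - r'‖ < ε₁ / n₀ ∧
      (fun i : Fin s₀ => r (Fin.castAdd k₀ i)) ≠ (fun i : Fin s₀ => r' (Fin.castAdd k₀ i)) ∧
      ‖(‖(fun i : Fin s₀ => r (Fin.castAdd k₀ i)) -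
            (fun i : Fin s₀ => r' (Fin.castAdd k₀ i))‖)⁻¹ •
          ((fun i : Fin s₀ => r (Fin.castAdd k₀ i)) -
            (fun i : Fin s₀ => r' (Fin.castAdd k₀ i))) -
        ‖e‖⁻¹ • e‖ < ε₁ :=
  stmt_8_general p₀ l s₀ k₀ hp₀ hl ε₁ hε₁ r hlin e he0
end

section
/- Let n₁ and k be positive integers and let a₁, …, a_k ∈ (0,1] be real numbers with a₁ + … + a_k = 1. Suppose ε₀ > 0 satisfies: ε₀ < aᵢ/(k·n₁²) for every 1 ≤ i ≤ k, and ε₀ < (1/(k·n₁))·(1 − (1/n₁)·(a₁m₁ + … + a_k m_k)) for all natural numbers m₁, …, m_k for which the right-hand side is positive. Let n₀ be any positive integer, set n := n₀·n₁, and let a₁', …, a_k' be positive real numbers with a₁' + … + a_k' = 1 and |aᵢ − aᵢ'| < ε₀/n₀ for every i. Let b₁, …, b_k ∈ [0,1] be real numbers such that n₁·bᵢ ∈ ℤ for every i and n·(a₁'b₁ + … + a_k'b_k) ∈ ℤ. Then: (a) if a₁b₁ + … + a_k b_k = 1, then a₁'b₁ + … + a_k'b_k = 1; and (b) if a₁b₁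 + … + a_k b_k < 1, then ⌊(n+1)·(a₁b₁ + … + a_k b_k)⌋ = n·(a₁'b₁ + … + a_k'b_k). -/
/-!
Write `S = ∑ aᵢbᵢ`, `S' = ∑ aᵢ'bᵢ`, `n = n₀n₁` and `δ = k n₁ ε₀`. Since `bᵢ ∈ [0,1]`, the integer
`z = n S'` satisfies `|n S - z| ≤ n · k ε₀ / n₀ = δ`. As `bᵢ ∈ (1/n₁) ℕ`, the bounds on `ε₀` give
`δ < 1 - S` when `S < 1`, and `δ < S` unless `S = 0`; these two margins pin `⌊(n + 1) S⌋` to `z`.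
If `S = 1`, then all `bᵢ = 1` because the `aᵢ` are positive, so `S' = ∑ aᵢ' = 1`.
-/

open Finset

theorem exists_natCast_eq_of_intCast_eq {x : ℝ} (hx : 0 ≤ x) (h : ∃ z : ℤ, x = z) :
    ∃ m : ℕ, x = m := by
  obtain ⟨z, rfl⟩ := h
  lift z to ℕ using (by exact_mod_cast hx)
  exact ⟨z, rfl⟩

section ConvexCombination

variable {ι : Type*} [Fintype ι]

theorem abs_sum_mul_sub_sum_mul_le {a a' b : ι → ℝ} {η : ℝ} (hclose : ∀ i, |a i - a' i| ≤ η)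
    (hb : ∀ i, |b i| ≤ 1) :
    |∑ i, a i * b i - ∑ i, a' i * b i| ≤ Fintype.card ι * η := by
  rw [← sum_sub_distrib]
  calc |∑ i, (a i * b i - a' i * b i)| ≤ ∑ i, |a i * b i - a' i * b i| :=
        abs_sum_le_sum_abs _ _
    _ ≤ ∑ _i : ι, η := sum_le_sum fun i _ => by
        rw [← sub_mul, abs_mul]
        exact mul_le_of_le_one_right ((abs_nonneg _).trans (hclose i)) (hb i)
          |>.trans' (mul_le_mul_of_nonneg_right (hclose i) (abs_nonneg _))
    _ = Fintype.card ι * η := by rw [sum_const, card_univ, nsmul_eq_mul]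

theorem abs_natCast_mul_sum_mul_sub_le {a a' b : ι → ℝ} {n₀ : ℕ} (hn₀ : 0 < n₀) (n₁ : ℕ)
    {ε : ℝ} (hclose : ∀ i, |a i - a' i| < ε / n₀) (hb : ∀ i, b i ∈ Set.Icc (0 : ℝ) 1) :
    |((n₀ * n₁ : ℕ) : ℝ) * (∑ i, a i * b i - ∑ i, a' i * b i)| ≤ Fintype.card ι * n₁ * ε := by
  rw [abs_mul, Nat.abs_cast]
  calc ((n₀ * n₁ : ℕ) : ℝ) * |∑ i, a i * b i - ∑ i, a' i * b i|
      ≤ ((n₀ * n₁ : ℕ) : ℝ) * (Fintype.card ι * (ε / n₀)) := by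
        gcongr
        exact abs_sum_mul_sub_sum_mul_le (fun i => (hclose i).le)
          fun i => abs_le.2 ⟨by linarith [(hb i).1], (hb i).2⟩
    _ = Fintype.card ι * n₁ * ε := by push_cast; field_simp

theorem forall_eq_one_of_sum_mul_eq_sum {a b : ι → ℝ} (ha : ∀ i, 0 < a i) (hb : ∀ i, b i ≤ 1)
    (h : ∑ i, a i * b i = ∑ i, a i) (i : ι) : b i = 1 := by
  have hzero : ∑ j, a j * (1 - b j) = 0 := by
    simp only [mul_sub, mul_one, sum_sub_distrib, h, sub_self]
  have hi := (sum_eq_zero_iff_of_nonneg fun j _ => mul_nonneg (ha j).le (sub_nonneg.2 (hb j))).1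
    hzero i (mem_univ i)
  linarith [(mul_eq_zero.1 hi).resolve_left (ha i).ne']

theorem sum_mul_eq_zero_or_lt {a b : ι → ℝ} (ha : ∀ i, 0 ≤ a i) {n δ : ℝ} (hn : 0 < n)
    (m : ι → ℕ) (hbm : ∀ i, n * b i = m i) (hδ : ∀ i, δ < a i / n) :
    ∑ i, a i * b i = 0 ∨ δ < ∑ i, a i * b i := by
  have hb : ∀ i, b i = m i / n := fun i => by rw [← hbm i, mul_div_cancel_left₀ _ hn.ne']
  by_cases hm : ∀ i, m i = 0
  · left
    simp [hb, hm]
  · right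
    obtain ⟨i, hi⟩ := not_forall.1 hm
    have hmi : (1 : ℝ) ≤ m i := by exact_mod_cast Nat.one_le_iff_ne_zero.2 hi
    calc δ < a i / n := hδ i
      _ ≤ a i * b i := by
        rw [hb i, mul_div_assoc']
        exact div_le_div_of_nonneg_right (le_mul_of_one_le_right (ha i) hmi) hn.le
      _ ≤ ∑ j, a j * b j := single_le_sum (f := fun j => a j * b j)
        (fun j _ => mul_nonneg (ha j) (by rw [hb j]; positivity)) (mem_univ i)

end ConvexCombination

theorem floor_add_one_mul_eq_of_abs_sub_le {N S δ : ℝ} {z : ℤ} (hz : |N * S - z| ≤ δ)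
    (hδ : δ < 1 - S) (hS : S = 0 ∨ δ < S) : ⌊(N + 1) * S⌋ = z := by
  obtain ⟨hlo, hhi⟩ := abs_le.1 hz
  rcases hS with rfl | hS
  · have h1 : z < 1 := by exact_mod_cast (by linarith : (z : ℝ) < 1)
    have h2 : -1 < z := by exact_mod_cast (by linarith : (-1 : ℝ) < z)
    obtain rfl : z = 0 := by omega
    simp
  · rw [Int.floor_eq_iff]
    constructor <;> linarith

theorem stmt_10_general (n₁ k : ℕ) (hn₁ : 0 < n₁) (hk : 0 < k)
    (a : Fin k → ℝ) (ha : ∀ i, a i ∈ Set.Ioc (0 : ℝ) 1) (hsum : ∑ i, a i = 1)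
    (ε₀ : ℝ)
    (hε₀1 : ∀ i, ε₀ < a i / ((k : ℝ) * (n₁ : ℝ) ^ 2))
    (hε₀2 : ∀ m : Fin k → ℕ,
      0 < (1 / ((k : ℝ) * n₁)) * (1 - (1 / (n₁ : ℝ)) * ∑ i, a i * (m i : ℝ)) →
      ε₀ < (1 / ((k : ℝ) * n₁)) * (1 - (1 / (n₁ : ℝ)) * ∑ i, a i * (m i : ℝ)))
    (n₀ : ℕ) (hn₀ : 0 < n₀)
    (a' : Fin k → ℝ) (hsum' : ∑ i, a' i = 1)
    (hclose : ∀ i, |a i - a' i| < ε₀ / n₀)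
    (b : Fin k → ℝ) (hb : ∀ i, b i ∈ Set.Icc (0 : ℝ) 1)
    (hbint : ∀ i, ∃ z : ℤ, (n₁ : ℝ) * b i = (z : ℝ))
    (hint : ∃ z : ℤ, ((n₀ * n₁ : ℕ) : ℝ) * ∑ i, a' i * b i = (z : ℝ)) :
    (∑ i, a i * b i = 1 → ∑ i, a' i * b i = 1) ∧
    (∑ i, a i * b i < 1 →
      (⌊(((n₀ * n₁ : ℕ) : ℝ) + 1) * ∑ i, a i * b i⌋ : ℝ) =
        ((n₀ * n₁ : ℕ) : ℝ) * ∑ i, a' i * b i) := by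
  refine ⟨fun h1 => ?_, fun hlt => ?_⟩
  · have hb1 := forall_eq_one_of_sum_mul_eq_sum (fun i => (ha i).1) (fun i => (hb i).2)
      (h1.trans hsum.symm)
    simp [hb1, hsum']
  have hkn : (0 : ℝ) < k * n₁ := by positivity
  have hn₁R : (0 : ℝ) < n₁ := by exact_mod_cast hn₁
  obtain ⟨z, hz⟩ := hint
  choose m hm using fun i =>
    exists_natCast_eq_of_intCast_eq (mul_nonneg hn₁R.le (hb i).1) (hbint i)
  have hS : (1 / (n₁ : ℝ)) * ∑ i, a i * m i = ∑ i, a i * b i := by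
    simp only [← hm, mul_left_comm (a _), ← mul_sum]
    field_simp
  have hδS : k * n₁ * ε₀ < 1 - ∑ i, a i * b i := by
    have h := hε₀2 m (by rw [hS]; exact mul_pos (by positivity) (by linarith))
    rwa [hS, one_div, lt_inv_mul_iff₀ hkn] at h
  have hδa : ∀ i, k * n₁ * ε₀ < a i / n₁ := fun i => by
    have h := hε₀1 i
    rw [lt_div_iff₀ (by positivity)] at h
    rw [lt_div_iff₀ hn₁R]
    linarith
  have hNz : |((n₀ * n₁ : ℕ) : ℝ) * ∑ i, a i * b i - z| ≤ k * n₁ * ε₀ := by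
    simpa [← hz, ← mul_sub] using abs_natCast_mul_sum_mul_sub_le hn₀ n₁ hclose hb
  rw [hz, floor_add_one_mul_eq_of_abs_sub_le hNz hδS
    (sum_mul_eq_zero_or_lt (fun i => (ha i).1.le) hn₁R m hm hδa)]

/-- The arithmetic core of the proof of Theorem 6.1 (`thm: dcc existence n complement with part
two`): rounding of convex combinations of `n₁`-complement coefficients. -/
theorem stmt_10 (n₁ k : ℕ) (hn₁ : 0 < n₁) (hk : 0 < k)
    (a : Fin k → ℝ) (ha : ∀ i, a i ∈ Set.Ioc (0 : ℝ) 1) (hsum : ∑ i, a i = 1)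
    (ε₀ : ℝ) (hε₀pos : 0 < ε₀)
    (hε₀1 : ∀ i, ε₀ < a i / ((k : ℝ) * (n₁ : ℝ) ^ 2))
    (hε₀2 : ∀ m : Fin k → ℕ,
      0 < (1 / ((k : ℝ) * n₁)) * (1 - (1 / (n₁ : ℝ)) * ∑ i, a i * (m i : ℝ)) →
      ε₀ < (1 / ((k : ℝ) * n₁)) * (1 - (1 / (n₁ : ℝ)) * ∑ i, a i * (m i : ℝ)))
    (n₀ : ℕ) (hn₀ : 0 < n₀)
    (a' : Fin k → ℝ) (ha' : ∀ i, 0 < a' i) (hsum' : ∑ i, a' i = 1)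
    (hclose : ∀ i, |a i - a' i| < ε₀ / n₀)
    (b : Fin k → ℝ) (hb : ∀ i, b i ∈ Set.Icc (0 : ℝ) 1)
    (hbint : ∀ i, ∃ z : ℤ, (n₁ : ℝ) * b i = (z : ℝ))
    (hint : ∃ z : ℤ, ((n₀ * n₁ : ℕ) : ℝ) * ∑ i, a' i * b i = (z : ℝ)) :
    (∑ i, a i * b i = 1 → ∑ i, a' i * b i = 1) ∧
    (∑ i, a i * b i < 1 →
      (⌊(((n₀ * n₁ : ℕ) : ℝ) + 1) * ∑ i, a i * b i⌋ : ℝ) =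
        ((n₀ * n₁ : ℕ) : ℝ) * ∑ i, a' i * b i) :=
  stmt_10_general n₁ k hn₁ hk a ha hsum ε₀ hε₀1 hε₀2 n₀ hn₀ a' hsum' hclose b hb hbint hint
end

section
/- Let s be a positive integer and let v = (v₁, …, v_s) ∈ [0,1]ˢ be a point with v ∉ ℚˢ such that Span_{ℚ≥0}({v₁, …, v_s} \ ℚ) ∩ (ℚ \ {0}) = ∅. Let V ⊆ ℝˢ be the rational envelope of v. Then there exist a vector e in the direction of V with ‖e‖∞ = 1 and a real number ε > 0 such that every point v⁺ = (v₁⁺, …, v_s⁺) ∈ V with v⁺ ≠ v and ‖ (v − v⁺)/‖v − v⁺‖∞ − e ‖∞ < ε satisfies vᵢ⁺ ≥ vᵢ for every 1 ≤ i ≤ s. -/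
/-- `Span_{ℚ≥0}(S)`: all finite sums `λ₁s₁ + … + λ_r s_r` with `r ≥ 1`, each `λᵢ` a
nonnegative rational and each `sᵢ ∈ S`. -/
def qnnSpan (S : Set ℝ) : Set ℝ :=
  {x | ∃ (r : ℕ), 0 < r ∧ ∃ (l : Fin r → ℚ) (s : Fin r → ℝ),
    (∀ i, 0 ≤ l i) ∧ (∀ i, s i ∈ S) ∧ x = ∑ i, (l i : ℝ) * s i}

/-- A point of `ℝˢ` with all rational coordinates. -/
def IsRationalPoint {s : ℕ} (x : Fin s → ℝ) : Prop := ∀ i, ∃ q : ℚ, x i = (q : ℝ)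

/-- An affine subspace of `ℝˢ` is defined over `ℚ` if it equals the affine span of its
rational points. -/
def IsRationalAffine {s : ℕ} (W : AffineSubspace ℝ (Fin s → ℝ)) : Prop :=
  (W : Set (Fin s → ℝ)) = ↑(affineSpan ℝ {x : Fin s → ℝ | x ∈ W ∧ IsRationalPoint x})

/-!
Let `D` be the direction of `V` and call a coordinate `i` free if some vector of `D` has a
nonzero `i`-th entry. Every free coordinate of `v` is irrational: if `vᵢ = q ∈ ℚ`, then
`V ∩ {xᵢ = q}` is again defined over `ℚ`, so minimality of `V` would force `D ⊆ {xᵢ = 0}`.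

By Gordan's alternative, either some `d ∈ D` is negative on every free coordinate, and then
`e = d / ‖d‖` works, since the normalized differences `(v - v⁺)/‖v - v⁺‖` lie in `D` and vanish
off the free coordinates; or some nonzero `a ≥ 0` supported on the free coordinates is
orthogonal to `D`. As `D` is defined over `ℚ`, such an `a` can be chosen rational. Then
`a ⬝ v = a ⬝ p` for a rational point `p ∈ V`, which is a positive rational number in
`Span_{ℚ≥0}` of the irrational coordinates of `v`, contrary to the hypothesis.
-/

open Submodule

variable {n : ℕ}

namespace IsRationalPoint

lemma zero : IsRationalPoint (0 : Fin n → ℝ) := fun _ => ⟨0, by simp⟩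

lemma add {x y : Fin n → ℝ} (hx : IsRationalPoint x) (hy : IsRationalPoint y) :
    IsRationalPoint (x + y) := fun i => by
  obtain ⟨a, ha⟩ := hx i
  obtain ⟨b, hb⟩ := hy i
  exact ⟨a + b, by simp [ha, hb]⟩

lemma sub {x y : Fin n → ℝ} (hx : IsRationalPoint x) (hy : IsRationalPoint y) :
    IsRationalPoint (x - y) := fun i => by
  obtain ⟨a, ha⟩ := hx i
  obtain ⟨b, hb⟩ := hy i
  exact ⟨a - b, by simp [ha, hb]⟩

lemma ratCast_smul (q : ℚ) {x : Fin n → ℝ} (hx : IsRationalPoint x) :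
    IsRationalPoint ((q : ℝ) • x) := fun i => by
  obtain ⟨a, ha⟩ := hx i
  exact ⟨q * a, by simp [ha]⟩

lemma sum {ι : Type*} (t : Finset ι) {f : ι → Fin n → ℝ} (hf : ∀ j ∈ t, IsRationalPoint (f j)) :
    IsRationalPoint (∑ j ∈ t, f j) :=
  Finset.sum_induction f IsRationalPoint (fun _ _ => add) zero hf

lemma single (i : Fin n) : IsRationalPoint (Pi.single i (1 : ℝ)) := fun j => by
  rcases eq_or_ne j i with rfl | h
  · exact ⟨1, by simp⟩
  · exact ⟨0, by simp [h]⟩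

lemma dotProduct {x y : Fin n → ℝ} (hx : IsRationalPoint x) (hy : IsRationalPoint y) :
    ∃ q : ℚ, x ⬝ᵥ y = q := by
  choose a ha using hx
  choose b hb using hy
  exact ⟨∑ i, a i * b i, by simp [_root_.dotProduct, ha, hb]⟩

end IsRationalPoint

def IsRationalSubspace (W : Submodule ℝ (Fin n → ℝ)) : Prop :=
  W = span ℝ {x | x ∈ W ∧ IsRationalPoint x}

lemma IsRationalSubspace.of_le_span {W : Submodule ℝ (Fin n → ℝ)}
    (h : W ≤ span ℝ {x | x ∈ W ∧ IsRationalPoint x}) : IsRationalSubspace W :=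
  le_antisymm h (span_le.2 fun _ hx => hx.1)

lemma isRationalSubspace_span {S : Set (Fin n → ℝ)} (hS : ∀ x ∈ S, IsRationalPoint x) :
    IsRationalSubspace (span ℝ S) :=
  .of_le_span (span_mono fun x hx => ⟨subset_span hx, hS x hx⟩)

lemma isRationalSubspace_top : IsRationalSubspace (⊤ : Submodule ℝ (Fin n → ℝ)) := by
  rw [← (Pi.basisFun ℝ (Fin n)).span_eq]
  exact isRationalSubspace_span (by rintro _ ⟨i, rfl⟩; simpa using IsRationalPoint.single i)

namespace IsRationalSubspace

variable {W : Submodule ℝ (Fin n → ℝ)}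

lemma exists_isRationalPoint_apply_ne_zero (hW : IsRationalSubspace W)
    {φ : Module.Dual ℝ (Fin n → ℝ)} (h : ¬ W ≤ LinearMap.ker φ) :
    ∃ w ∈ W, IsRationalPoint w ∧ φ w ≠ 0 := by
  by_contra! h'
  exact h (hW.le.trans (span_le.2 fun w hw => h' w hw.1 hw.2))

lemma inf_ker (hW : IsRationalSubspace W) {φ : Module.Dual ℝ (Fin n → ℝ)}
    (hφ : ∀ x, IsRationalPoint x → ∃ q : ℚ, φ x = q) :
    IsRationalSubspace (W ⊓ LinearMap.ker φ) := by
  by_cases hWφ : W ≤ LinearMap.ker φ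
  · rwa [inf_eq_left.2 hWφ]
  obtain ⟨w₀, hw₀W, hw₀, hφw₀⟩ := hW.exists_isRationalPoint_apply_ne_zero hWφ
  -- `P` projects along `w₀` onto `ker φ`; it fixes `ker φ` and preserves rational points.
  let P : (Fin n → ℝ) →ₗ[ℝ] (Fin n → ℝ) := LinearMap.id - (φ w₀)⁻¹ • φ.smulRight w₀
  have hP : ∀ x, P x = x - (φ x / φ w₀) • w₀ := fun x => by
    simp [P, div_eq_inv_mul, smul_smul]
  refine of_le_span fun x ⟨hxW, hxφ⟩ => ?_
  have hx : P x = x := by rw [hP, LinearMap.mem_ker.1 hxφ, zero_div, zero_smul, sub_zero]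
  have hxP : P x ∈ (span ℝ {y | y ∈ W ∧ IsRationalPoint y}).map P := mem_map_of_mem (hW.le hxW)
  rw [hx, map_span] at hxP
  refine span_mono ?_ hxP
  rintro _ ⟨y, ⟨hyW, hy⟩, rfl⟩
  obtain ⟨q, hq⟩ := hφ y hy
  obtain ⟨q₀, hq₀⟩ := hφ w₀ hw₀
  refine ⟨⟨?_, ?_⟩, ?_⟩
  · rw [hP]
    exact sub_mem hyW (smul_mem _ _ hw₀W)
  · simp [hP, hφw₀]
  · rw [hP, hq, hq₀, ← Rat.cast_div]
    exact hy.sub (hw₀.ratCast_smul _)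

lemma inf_iInf_ker (hW : IsRationalSubspace W) (Φ : Finset (Module.Dual ℝ (Fin n → ℝ)))
    (hΦ : ∀ φ ∈ Φ, ∀ x, IsRationalPoint x → ∃ q : ℚ, φ x = q) :
    IsRationalSubspace (W ⊓ ⨅ φ ∈ Φ, LinearMap.ker φ) := by
  classical
  induction Φ using Finset.induction_on with
  | empty => simpa using hW
  | insert φ Φ _ ih =>
    rw [Finset.iInf_insert, inf_left_comm, inf_comm]
    exact (ih fun ψ hψ => hΦ ψ (Finset.mem_insert_of_mem hψ)).inf_ker
      (hΦ φ (Finset.mem_insert_self _ _))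

lemma exists_isRationalPoint_norm_sub_lt (hW : IsRationalSubspace W) {x : Fin n → ℝ}
    (hx : x ∈ W) {ε : ℝ} (hε : 0 < ε) : ∃ r ∈ W, IsRationalPoint r ∧ ‖x - r‖ < ε := by
  obtain ⟨T, hTS, hxT⟩ := mem_span_finite_of_mem_span (hW.le hx)
  obtain ⟨c, rfl⟩ := (mem_span_range_iff_exists_fun ℝ).1 (by simpa using hxT :
    x ∈ span ℝ (Set.range ((↑) : T → Fin n → ℝ)))
  have hg : Continuous fun c : T → ℝ => ∑ j, c j • (j : Fin n → ℝ) := by fun_prop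
  obtain ⟨δ, hδ, hδε⟩ := Metric.continuous_iff.1 hg c ε hε
  choose q hq using fun j => exists_rat_near (c j) hδ
  refine ⟨∑ j, (q j : ℝ) • (j : Fin n → ℝ), sum_mem fun j _ => smul_mem _ _ (hTS j.2).1,
    IsRationalPoint.sum _ fun j _ => (hTS j.2).2.ratCast_smul _, ?_⟩
  rw [← dist_eq_norm, dist_comm]
  exact hδε _ ((dist_pi_lt_iff hδ).2 fun j => by simpa [Real.dist_eq, abs_sub_comm] using hq j)

end IsRationalSubspace

namespace IsRationalAffine

variable {A : AffineSubspace ℝ (Fin n → ℝ)}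

lemma eq_affineSpan (hA : IsRationalAffine A) :
    A = affineSpan ℝ {x | x ∈ A ∧ IsRationalPoint x} :=
  SetLike.coe_injective hA

lemma exists_isRationalPoint (hA : IsRationalAffine A) (hne : (A : Set (Fin n → ℝ)).Nonempty) :
    ∃ p ∈ A, IsRationalPoint p := by
  rw [hA] at hne
  exact (affineSpan_nonempty ℝ).1 hne

lemma direction (hA : IsRationalAffine A) : IsRationalSubspace A.direction := by
  rw [hA.eq_affineSpan, direction_affineSpan, vectorSpan_def]
  exact isRationalSubspace_span (by rintro _ ⟨x, hx, y, hy, rfl⟩; exact hx.2.sub hy.2)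

lemma of_direction {p : Fin n → ℝ} (hpA : p ∈ A) (hp : IsRationalPoint p)
    (hA : IsRationalSubspace A.direction) : IsRationalAffine A := by
  set R := {x | x ∈ A ∧ IsRationalPoint x}
  have hpR : p ∈ R := ⟨hpA, hp⟩
  have hle : affineSpan ℝ R ≤ A := affineSpan_le.2 fun x hx => hx.1
  have hdir : A.direction ≤ (affineSpan ℝ R).direction := by
    refine hA.le.trans (span_le.2 ?_)
    rintro y ⟨hy, hyr⟩
    rw [direction_affineSpan]
    simpa using vsub_mem_vectorSpan ℝ
      (show y +ᵥ p ∈ R from ⟨AffineSubspace.vadd_mem_of_mem_direction hy hpA, hyr.add hp⟩) hpR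
  have := AffineSubspace.eq_of_direction_eq_of_nonempty_of_le
    (le_antisymm (AffineSubspace.direction_le hle) hdir) ⟨p, subset_affineSpan ℝ R hpR⟩ hle
  exact congrArg SetLike.coe this.symm

lemma apply_notMem_range_ratCast {V : AffineSubspace ℝ (Fin n → ℝ)}
    {v : Fin n → ℝ} (hV : IsRationalAffine V) (hvV : v ∈ V)
    (hVmin : ∀ W : AffineSubspace ℝ (Fin n → ℝ), v ∈ W → IsRationalAffine W → V ≤ W)
    {i : Fin n} (hi : ∃ y ∈ V.direction, y i ≠ 0) :
    v i ∉ Set.range ((↑) : ℚ → ℝ) := by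
  rintro ⟨q, hq⟩
  obtain ⟨y, hyV, hyi⟩ := hi
  let H := AffineSubspace.mk' v (LinearMap.ker (LinearMap.proj i : (Fin n → ℝ) →ₗ[ℝ] ℝ))
  have hvH : v ∈ H := AffineSubspace.self_mem_mk' _ _
  obtain ⟨p₀, hp₀V, hp₀⟩ := hV.exists_isRationalPoint ⟨v, hvV⟩
  obtain ⟨w, hwV, hw, hwi⟩ := hV.direction.exists_isRationalPoint_apply_ne_zero
    (φ := LinearMap.proj i) fun hle => hyi (hle hyV)
  obtain ⟨q₀, hq₀⟩ := hp₀ i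
  obtain ⟨r, hr⟩ := hw i
  -- a rational point of `V ⊓ H`: move `p₀` along `w` until its `i`-th coordinate is `q`
  let p := (((q - q₀) / r : ℚ) : ℝ) • w + p₀
  have hpV : p ∈ V := AffineSubspace.vadd_mem_of_mem_direction (V.direction.smul_mem _ hwV) hp₀V
  have hpH : p ∈ H := by
    have hr0 : (r : ℝ) ≠ 0 := hr ▸ hwi
    simp [H, p, AffineSubspace.mem_mk', hq, hq₀, hr, hr0]
  have hVH : IsRationalAffine (V ⊓ H) := by
    refine .of_direction ⟨hpV, hpH⟩ ((hw.ratCast_smul _).add hp₀) ?_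
    rw [AffineSubspace.direction_inf_of_mem hvV hvH, AffineSubspace.direction_mk']
    exact hV.direction.inf_ker fun x hx => hx i
  have hdir := AffineSubspace.direction_le ((hVmin (V ⊓ H) ⟨hvV, hvH⟩ hVH).trans inf_le_right)
  rw [AffineSubspace.direction_mk'] at hdir
  exact hyi (hdir hyV)

end IsRationalAffine

lemma nonpos_of_forall_mul_le {b c : ℝ} (h : ∀ t : ℝ, 0 ≤ t → t * b ≤ c) : b ≤ 0 := by
  by_contra! hb
  have := h ((|c| + 1) / b) (by positivity)
  rw [div_mul_cancel₀ _ hb.ne'] at this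
  linarith [le_abs_self c]

lemma ne_zero_and_nonneg_of_forall_dotProduct_neg {a : Fin n → ℝ} {F : Set (Fin n)}
    (h : ∀ x : Fin n → ℝ, (∀ i ∈ F, x i < 0) → a ⬝ᵥ x < 0) :
    a ≠ 0 ∧ (∀ i, 0 ≤ a i) ∧ ∀ i ∉ F, a i = 0 := by
  -- test `a` on the all-`(-1)` vector moved along a coordinate axis
  let b : Fin n → ℝ := fun _ => -1
  have hab : ∀ i (t : ℝ), (t ≤ 0 ∨ i ∉ F) → t * a i < -(a ⬝ᵥ b) := fun i t hit => by
    have := h (b + t • Pi.single i 1) fun j hj => by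
      rcases eq_or_ne j i with rfl | hji
      · have : t ≤ 0 := hit.resolve_right (not_not.2 hj)
        simp [b]
        linarith
      · simp [b, hji]
    simp only [dotProduct_add, dotProduct_smul, dotProduct_single, smul_eq_mul, mul_one] at this
    linarith
  have ha : ∀ i, 0 ≤ a i := fun i => neg_nonpos.1 <| nonpos_of_forall_mul_le (c := -(a ⬝ᵥ b))
    fun t _ => by linarith [hab i (-t) (.inl (by linarith))]
  refine ⟨fun ha0 => ?_, ha, fun i hi => ?_⟩
  · simpa [ha0] using h b fun _ _ => by simp [b]
  · exact le_antisymm (nonpos_of_forall_mul_le fun t _ => (hab i t (.inr hi)).le) (ha i)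

/-- Gordan's alternative, by separating `D` from the open orthant `{x | ∀ i ∈ F, x i < 0}`. -/
lemma exists_neg_or_exists_nonneg_dotProduct_eq_zero (D : Submodule ℝ (Fin n → ℝ))
    (F : Set (Fin n)) :
    (∃ d ∈ D, ∀ i ∈ F, d i < 0) ∨
      ∃ a : Fin n → ℝ, a ≠ 0 ∧ (∀ i, 0 ≤ a i) ∧ (∀ i ∉ F, a i = 0) ∧ ∀ d ∈ D, a ⬝ᵥ d = 0 := by
  refine or_iff_not_imp_left.2 fun h => ?_
  let N : Set (Fin n → ℝ) := ⋂ i ∈ F, {x | x i < 0}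
  have hN : ∀ x, x ∈ N ↔ ∀ i ∈ F, x i < 0 := by simp [N]
  have hNopen : IsOpen N :=
    F.toFinite.isOpen_biInter fun i _ => isOpen_lt (continuous_apply i) continuous_const
  have hNconv : Convex ℝ N :=
    convex_iInter₂ fun i _ => convex_halfSpace_lt (LinearMap.proj i).isLinear 0
  have hdisj : Disjoint N D := Set.disjoint_left.2 fun d hdN hdD => h ⟨d, hdD, (hN d).1 hdN⟩
  obtain ⟨f, u, hfN, hfD⟩ := geometric_hahn_banach_open hNconv hNopen D.convex hdisj
  let a := (dotProductEquiv ℝ (Fin n)).symm f.toLinearMap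
  have hf : ∀ x, f x = a ⬝ᵥ x := fun x => by
    rw [← dotProductEquiv_apply_apply, LinearEquiv.apply_symm_apply]; rfl
  have hle : ∀ d ∈ D, a ⬝ᵥ d ≤ 0 := fun d hd => nonpos_of_forall_mul_le (c := -u) fun t _ => by
    have := hfD _ (D.smul_mem (-t) hd)
    rw [hf, dotProduct_smul, smul_eq_mul] at this
    linarith
  have hu : u ≤ 0 := by simpa using hfD 0 D.zero_mem
  obtain ⟨ha, ha0, haF⟩ := ne_zero_and_nonneg_of_forall_dotProduct_neg fun x hx =>
    hf x ▸ (hfN x ((hN x).2 hx)).trans_le hu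
  exact ⟨a, ha, ha0, haF, fun d hd =>
    le_antisymm (hle d hd) (by linarith [hle (-d) (D.neg_mem hd), dotProduct_neg a d])⟩

lemma IsRationalSubspace.exists_isRationalPoint_orthogonal_norm_sub_lt
    {D : Submodule ℝ (Fin n → ℝ)} (hD : IsRationalSubspace D) {a : Fin n → ℝ}
    (haD : ∀ d ∈ D, a ⬝ᵥ d = 0) {ε : ℝ} (hε : 0 < ε) :
    ∃ b, IsRationalPoint b ∧ (∀ d ∈ D, b ⬝ᵥ d = 0) ∧ (∀ i, a i = 0 → b i = 0) ∧ ‖a - b‖ < ε := by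
  classical
  obtain ⟨B, hBD, -, hBspan, -⟩ :=
    exists_finset_span_eq_linearIndepOn ℝ {x | x ∈ D ∧ IsRationalPoint x}
  rw [← hD] at hBspan
  let Φ : Finset (Module.Dual ℝ (Fin n → ℝ)) :=
    B.image (dotProductEquiv ℝ (Fin n)) ∪
      (Finset.univ.filter (a · = 0)).image (LinearMap.proj (R := ℝ) (φ := fun _ => ℝ))
  have hΦ : ∀ φ ∈ Φ, ∀ x, IsRationalPoint x → ∃ q : ℚ, φ x = q := by
    simp only [Φ, Finset.mem_union, Finset.mem_image]
    rintro _ (⟨w, hw, rfl⟩ | ⟨i, -, rfl⟩) x hx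
    · exact (hBD hw).2.dotProduct hx
    · exact hx i
  have hmem : ∀ b, b ∈ ⊤ ⊓ ⨅ φ ∈ Φ, LinearMap.ker φ ↔
      (∀ w ∈ B, w ⬝ᵥ b = 0) ∧ ∀ i, a i = 0 → b i = 0 := by
    simp [Φ, Submodule.mem_iInf, or_imp, forall_and]
  have haU : a ∈ ⊤ ⊓ ⨅ φ ∈ Φ, LinearMap.ker φ :=
    (hmem a).2 ⟨fun w hw => dotProduct_comm w a ▸ haD w (hBspan ▸ subset_span hw), fun _ h => h⟩
  obtain ⟨b, hbU, hb, hab⟩ :=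
    (isRationalSubspace_top.inf_iInf_ker Φ hΦ).exists_isRationalPoint_norm_sub_lt haU hε
  rw [hmem] at hbU
  refine ⟨b, hb, fun d hd => ?_, hbU.2, hab⟩
  have : D ≤ LinearMap.ker (dotProductEquiv ℝ (Fin n) b) :=
    hBspan ▸ span_le.2 fun w hw => by simpa [dotProduct_comm] using hbU.1 w hw
  exact this hd

lemma IsRationalSubspace.exists_neg_or_exists_isRationalPoint_nonneg_dotProduct_eq_zero
    {D : Submodule ℝ (Fin n → ℝ)} (hD : IsRationalSubspace D) (F : Set (Fin n)) :
    (∃ d ∈ D, ∀ i ∈ F, d i < 0) ∨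
      ∃ a : Fin n → ℝ, IsRationalPoint a ∧ a ≠ 0 ∧ (∀ i, 0 ≤ a i) ∧ (∀ i ∉ F, a i = 0) ∧
        ∀ d ∈ D, a ⬝ᵥ d = 0 := by
  classical
  refine (exists_neg_or_exists_nonneg_dotProduct_eq_zero D F).imp_right ?_
  rintro ⟨a, ha, ha0, haF, haD⟩
  let P := Finset.univ.filter (0 < a ·)
  have hP : P.Nonempty := by
    obtain ⟨i, hi⟩ := Function.ne_iff.1 ha
    exact ⟨i, by simpa [P] using (ha0 i).lt_of_ne' hi⟩
  obtain ⟨b, hb, hbD, hab, hba⟩ := hD.exists_isRationalPoint_orthogonal_norm_sub_lt haD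
    ((Finset.lt_inf'_iff hP).2 fun i hi => (Finset.mem_filter.1 hi).2)
  have hbP : ∀ i ∈ P, 0 < b i := fun i hi => by
    have h1 := (le_abs_self _).trans (norm_le_pi_norm (a - b) i)
    have h2 := P.inf'_le a hi
    simp only [Pi.sub_apply] at h1
    linarith
  have hb0 : ∀ i, 0 ≤ b i := fun i => by
    by_cases hi : i ∈ P
    · exact (hbP i hi).le
    · simp [hab i (le_antisymm (by simpa [P] using hi) (ha0 i))]
  obtain ⟨i, hi⟩ := hP
  exact ⟨b, hb, fun h => (hbP i hi).ne' (congrFun h i), hb0,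
    fun i hiF => hab i (haF i hiF), hbD⟩

lemma exists_unit_forall_nonpos_of_norm_sub_lt {D : Submodule ℝ (Fin n → ℝ)}
    {d : Fin n → ℝ} (hdD : d ∈ D) (hd : d ≠ 0) (hneg : ∀ i, (∃ y ∈ D, y i ≠ 0) → d i < 0) :
    ∃ e ∈ D, ‖e‖ = 1 ∧ ∃ ε > 0, ∀ x ∈ D, ‖‖x‖⁻¹ • x - e‖ < ε → ∀ i, x i ≤ 0 := by
  classical
  let P := Finset.univ.filter (d · < 0)
  have hP : P.Nonempty := by
    obtain ⟨i, hi⟩ := Function.ne_iff.1 hd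
    exact ⟨i, by simpa [P] using hneg i ⟨d, hdD, hi⟩⟩
  have hnd : 0 < ‖d‖ := norm_pos_iff.2 hd
  let e := ‖d‖⁻¹ • d
  refine ⟨e, D.smul_mem _ hdD, by simp [e, norm_smul, hnd.ne'], P.inf' hP (-e ·),
    (Finset.lt_inf'_iff hP).2 fun i hi => ?_, fun x hx hxe i => ?_⟩
  · simpa [e] using mul_neg_of_pos_of_neg (inv_pos.2 hnd) (Finset.mem_filter.1 hi).2
  by_cases hi : ∃ y ∈ D, y i ≠ 0
  · have h1 := (le_abs_self _).trans_lt ((norm_le_pi_norm (‖x‖⁻¹ • x - e) i).trans_lt hxe)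
    have h2 := P.inf'_le (-e ·) (Finset.mem_filter.2 ⟨Finset.mem_univ i, hneg i hi⟩)
    simp only [Pi.sub_apply, Pi.smul_apply, smul_eq_mul] at h1
    by_contra! hxi
    nlinarith [inv_nonneg.2 (norm_nonneg x)]
  · push Not at hi
    exact (hi x hx).le

lemma dotProduct_mem_qnnSpan {S : Set ℝ} {a x : Fin n → ℝ} (ha : IsRationalPoint a)
    (ha0 : ∀ i, 0 ≤ a i) (hne : a ≠ 0) (hx : ∀ i, a i ≠ 0 → x i ∈ S) :
    a ⬝ᵥ x ∈ qnnSpan S := by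
  classical
  choose q hq using ha
  let T := Finset.univ.filter (a · ≠ 0)
  have hT : T.Nonempty := let ⟨i, hi⟩ := Function.ne_iff.1 hne; ⟨i, by simpa [T] using hi⟩
  let σ := T.equivFin
  refine ⟨T.card, T.card_pos.2 hT, fun k => q (σ.symm k), fun k => x (σ.symm k),
    fun k => by exact_mod_cast (hq _) ▸ ha0 _, fun k => hx _ (Finset.mem_filter.1 (σ.symm k).2).2,
    ?_⟩
  rw [Equiv.sum_comp σ.symm (fun j : T => (q j : ℝ) * x j),
    Finset.sum_coe_sort T (fun i => (q i : ℝ) * x i), dotProduct,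
    ← Finset.sum_filter_of_ne fun i _ h => left_ne_zero_of_mul h]
  simp [hq, T]

lemma dotProduct_mem_qnnSpan_inter {a v p : Fin n → ℝ} (ha : IsRationalPoint a) (hne : a ≠ 0)
    (ha0 : ∀ i, 0 ≤ a i) (hv0 : ∀ i, 0 ≤ v i)
    (hv : ∀ i, a i ≠ 0 → v i ∉ Set.range ((↑) : ℚ → ℝ)) (hp : IsRationalPoint p)
    (hvp : a ⬝ᵥ v = a ⬝ᵥ p) :
    a ⬝ᵥ v ∈ qnnSpan (Set.range v \ Set.range ((↑) : ℚ → ℝ)) ∩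
      (Set.range ((↑) : ℚ → ℝ) \ {0}) := by
  have hpos : 0 < a ⬝ᵥ v := by
    obtain ⟨i, hi⟩ := Function.ne_iff.1 hne
    have hvi : v i ≠ 0 := fun h => hv i hi ⟨0, by simp [h]⟩
    exact Finset.sum_pos' (fun j _ => mul_nonneg (ha0 j) (hv0 j)) ⟨i, Finset.mem_univ _,
      mul_pos ((ha0 i).lt_of_ne' hi) ((hv0 i).lt_of_ne' hvi)⟩
  obtain ⟨q, hq⟩ := ha.dotProduct hp
  exact ⟨dotProduct_mem_qnnSpan ha ha0 hne fun i hi => ⟨⟨i, rfl⟩, hv i hi⟩,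
    ⟨q, (hvp.trans hq).symm⟩, hpos.ne'⟩

theorem stmt_11_general (s : ℕ)
    (v : Fin s → ℝ) (hv01 : ∀ i, v i ∈ Set.Icc (0 : ℝ) 1)
    (hvirr : ¬ IsRationalPoint v)
    (hspan : qnnSpan (Set.range v \ Set.range ((↑) : ℚ → ℝ)) ∩
      (Set.range ((↑) : ℚ → ℝ) \ {0}) = ∅)
    (V : AffineSubspace ℝ (Fin s → ℝ)) (hvV : v ∈ V) (hVrat : IsRationalAffine V)
    (hVmin : ∀ W : AffineSubspace ℝ (Fin s → ℝ), v ∈ W → IsRationalAffine W → V ≤ W) :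
    ∃ e : Fin s → ℝ, e ∈ V.direction ∧ ‖e‖ = 1 ∧
      ∃ ε : ℝ, 0 < ε ∧
        ∀ vp : Fin s → ℝ, vp ∈ V → vp ≠ v →
          ‖(‖v - vp‖)⁻¹ • (v - vp) - e‖ < ε → ∀ i, v i ≤ vp i := by
  obtain ⟨p₀, hp₀V, hp₀⟩ := hVrat.exists_isRationalPoint ⟨v, hvV⟩
  have hvp₀ : v - p₀ ∈ V.direction := AffineSubspace.vsub_mem_direction hvV hp₀V
  let F := {i | ∃ y ∈ V.direction, y i ≠ 0}
  have hirr : ∀ i ∈ F, v i ∉ Set.range ((↑) : ℚ → ℝ) := fun i hi =>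
    hVrat.apply_notMem_range_ratCast hvV hVmin hi
  rcases hVrat.direction.exists_neg_or_exists_isRationalPoint_nonneg_dotProduct_eq_zero F with
    ⟨d, hdV, hdF⟩ | ⟨a, ha, hne, ha0, haF, haV⟩
  · have hd : d ≠ 0 := by
      obtain ⟨i, hi⟩ := Function.ne_iff.1 (sub_ne_zero.2 fun h => hvirr (h ▸ hp₀) : v - p₀ ≠ 0)
      exact fun h => (hdF i ⟨_, hvp₀, hi⟩).ne (by simp [h])
    obtain ⟨e, heV, he, ε, hε, h⟩ := exists_unit_forall_nonpos_of_norm_sub_lt hdV hd hdF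
    refine ⟨e, heV, he, ε, hε, fun vp hvp _ hvpe i => ?_⟩
    simpa [sub_nonpos] using h _ (AffineSubspace.vsub_mem_direction hvV hvp) hvpe i
  · refine absurd (hspan.subset (dotProduct_mem_qnnSpan_inter ha hne ha0 (fun i => (hv01 i).1)
      (fun i hi => hirr i (by_contra fun hiF => hi (haF i hiF))) hp₀ ?_)) (Set.notMem_empty _)
    rw [← sub_eq_zero, ← dotProduct_sub]
    exact haV _ hvp₀

/-- Step in the proof of Theorem 1.10: if `Span_{ℚ≥0}({v₁,…,v_s} \ ℚ) ∩ (ℚ \ {0}) = ∅`, there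
are a unit direction `e` of the rational envelope `V` of `v` and `ε > 0` such that every
`v⁺ ∈ V` whose normalized difference from `v` is `ε`-close to `e` satisfies `v⁺ ≥ v`
coordinatewise. The norm on `Fin s → ℝ` is the maximum norm. -/
theorem stmt_11 (s : ℕ) (hs : 0 < s)
    (v : Fin s → ℝ) (hv01 : ∀ i, v i ∈ Set.Icc (0 : ℝ) 1)
    (hvirr : ¬ IsRationalPoint v)
    (hspan : qnnSpan (Set.range v \ Set.range ((↑) : ℚ → ℝ)) ∩
      (Set.range ((↑) : ℚ → ℝ) \ {0}) = ∅)
    (V : AffineSubspace ℝ (Fin s → ℝ)) (hvV : v ∈ V) (hVrat : IsRationalAffine V)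
    (hVmin : ∀ W : AffineSubspace ℝ (Fin s → ℝ), v ∈ W → IsRationalAffine W → V ≤ W) :
    ∃ e : Fin s → ℝ, e ∈ V.direction ∧ ‖e‖ = 1 ∧
      ∃ ε : ℝ, 0 < ε ∧
        ∀ vp : Fin s → ℝ, vp ∈ V → vp ≠ v →
          ‖(‖v - vp‖)⁻¹ • (v - vp) - e‖ < ε → ∀ i, v i ≤ vp i :=
  stmt_11_general s v hv01 hvirr hspan V hvV hVrat hVmin
end

section
/- Let ‖·‖∞ be the maximum norm on ℝ², let e := (1,1) ∈ ℝ², and let g : [0,∞) → [0,∞) be a monotone nondecreasing function with g(x) → +∞ as x → +∞. Let m be a positive integer such that g(x) ≥ 2 for all x ≥ m. Then there exists a point v = (r₁, r₂) ∈ ℝ² satisfying the following: (1) 1, r₁, r₂ are linearly independent over ℚ (in particular v ∉ ℚ²); and (2) for every integer n ≥ m and every point vₙ ∈ ℝ² with n·vₙ ∈ ℤ² (which forces vₙ ∈ ℚ² and hence v ≠ vₙ), either ‖v − vₙ‖∞ > 1/(n·g(n)) or ‖ (v − vₙ)/‖v − vₙ‖∞ − e ‖∞ > 1. -/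
/-!
Take a divisibility chain `p₀ ∣ p₁ ∣ ⋯` with `p_{j+1} / p_j → ∞` and
`v = -(∑ₖ 1/p_{2k}, ∑ₖ 1/p_{2k+1})`. Cutting the coordinate sum that contains `1/p_j` after
that term writes it as `A/p_j + t` with `A ∈ ℤ` and `0 < t ≤ 2/p_{j+2}`; since `n A/p_j` lies in
`ℤ/p_j`, the number `-n (A/p_j + t)` lies at least `1/p_j - n t` above the integer below it.
This exceeds `1/g(n)` as soon as `g(n) ≥ 2 p_j` and `4 n p_j < p_{j+2}`, and the chain is built
from the thresholds of `g` so that every `n ≥ m` admits such a `j`. In that coordinate the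
integer point `n v_n` then lies either more than `1/g(n)` below `n v`, or above it, in which
case `v - v_n` has a negative coordinate and its direction is at distance `> 1` from `e`.

Independence over `ℚ` is Liouville's argument: if `∑ εᵢ/pᵢ = a/d` with bounded integers `εᵢ`,
then `d p_j` times the tail after `j` is an integer of absolute value `< 1`, so all late tails
vanish and hence so do all late `εᵢ`; taking `εᵢ` to alternate between the two coefficients of a
relation kills both.
-/

open Filter Finset

lemma sub_le_fract_neg_div_add (z : ℤ) {Q : ℕ} (hQ : 0 < Q) {t : ℝ} (ht : 0 < t) :
    1 / Q - t ≤ Int.fract (-(z / Q + t)) := by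
  have hQ' : (0 : ℝ) < Q := by exact_mod_cast hQ
  set y := -(z / Q + t)
  have hfloor : (Q : ℝ) * ⌊y⌋ < -z := by
    have := (Int.floor_le y).trans_lt (show y < -z / Q by simp only [y, neg_div]; linarith)
    rwa [lt_div_iff₀ hQ', mul_comm] at this
  have hfloor' : (Q : ℝ) * ⌊y⌋ + 1 ≤ -z := by
    exact_mod_cast (show (Q : ℤ) * ⌊y⌋ < -z by exact_mod_cast hfloor)
  calc 1 / Q - t ≤ (-z - Q * ⌊y⌋) / Q - t := by gcongr; linarith
    _ = Int.fract y := by simp only [Int.fract, y]; field_simp; ring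

section Lacunary

variable {a : ℕ → ℕ}

lemma two_pow_mul_le_of_two_mul_le_succ (hdouble : ∀ k, 2 * a k ≤ a (k + 1)) (k i : ℕ) :
    2 ^ i * a k ≤ a (i + k) := by
  induction i with
  | zero => simp
  | succ i ih =>
    rw [pow_succ, Nat.add_right_comm]
    linarith [hdouble (i + k)]

variable (ha : ∀ k, 0 < a k) (hdouble : ∀ k, 2 * a k ≤ a (k + 1))
include ha hdouble

lemma abs_div_le_geometric {ε : ℕ → ℝ} {E : ℝ} (hε : ∀ i, |ε i| ≤ E) (k i : ℕ) :
    |ε (i + k) / a (i + k)| ≤ E / a k * (1 / 2) ^ i := by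
  have hk : (0 : ℝ) < a k := by exact_mod_cast ha k
  have hgrow : (2 : ℝ) ^ i * a k ≤ a (i + k) := by
    exact_mod_cast two_pow_mul_le_of_two_mul_le_succ hdouble k i
  rw [abs_div, Nat.abs_cast, div_pow, one_pow, div_mul_div_comm, mul_one, mul_comm (a k : ℝ)]
  exact div_le_div₀ ((abs_nonneg _).trans (hε 0)) (hε _) (by positivity) hgrow

lemma summable_div_of_abs_le {ε : ℕ → ℝ} {E : ℝ} (hε : ∀ i, |ε i| ≤ E) :
    Summable fun i => ε i / a i :=
  .of_norm_bounded ((summable_geometric_two).mul_left (E / a 0))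
    (abs_div_le_geometric ha hdouble hε 0)

lemma abs_tsum_shift_le {ε : ℕ → ℝ} {E : ℝ} (hε : ∀ i, |ε i| ≤ E) (k : ℕ) :
    |∑' i, ε (i + k) / a (i + k)| ≤ 2 * E / a k := by
  have := tsum_of_norm_bounded (f := fun i => ε (i + k) / a (i + k))
    ((hasSum_geometric_two).mul_left (E / a k)) (abs_div_le_geometric ha hdouble hε k)
  rwa [div_mul_eq_mul_div, mul_comm] at this

omit hdouble in
lemma exists_int_eq_mul_sum (hdvd : ∀ k, a k ∣ a (k + 1)) (ε : ℕ → ℤ) (k : ℕ) :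
    ∃ z : ℤ, (a k : ℝ) * ∑ i ∈ range (k + 1), (ε i : ℝ) / a i = z := by
  refine ⟨∑ i ∈ range (k + 1), ε i * (a k / a i : ℕ), ?_⟩
  simp only [Int.cast_sum, Int.cast_mul, Int.cast_natCast, mul_sum]
  refine sum_congr rfl fun i hi => ?_
  have hik : a i ∣ a k :=
    Nat.rel_of_forall_rel_succ_of_le (· ∣ ·) hdvd (by simpa [Nat.lt_succ_iff] using hi)
  have : (a i : ℝ) ≠ 0 := by exact_mod_cast (ha i).ne'
  rw [Nat.cast_div hik this]
  field_simp

lemma exists_int_mul_tsum_eq (hdvd : ∀ k, a k ∣ a (k + 1)) {ε : ℕ → ℤ} {E : ℝ}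
    (hε : ∀ i, |(ε i : ℝ)| ≤ E) (k : ℕ) :
    ∃ z : ℤ, (a k : ℝ) * ∑' i, (ε i : ℝ) / a i =
      z + a k * ∑' i, (ε (i + (k + 1)) : ℝ) / a (i + (k + 1)) := by
  obtain ⟨z, hz⟩ := exists_int_eq_mul_sum ha hdvd ε k
  refine ⟨z, ?_⟩
  rw [← (summable_div_of_abs_le ha hdouble hε).sum_add_tsum_nat_add (k + 1), mul_add, hz]

lemma one_div_lt_fract_neg_mul_tsum (hdvd : ∀ k, a k ∣ a (k + 1)) {k n : ℕ} (hn : 0 < n)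
    (hnk : 4 * n * a k < a (k + 1)) {G : ℝ} (hG : 2 * a k ≤ G) :
    1 / G < Int.fract (-(n * ∑' i, (1 : ℝ) / a i)) := by
  have hε : ∀ _ : ℕ, |((1 : ℤ) : ℝ)| ≤ 1 := fun _ => by simp
  obtain ⟨z, hz⟩ := exists_int_mul_tsum_eq (ε := fun _ => 1) ha hdouble hdvd hε k
  simp only [Int.cast_one] at hz
  set t := ∑' i, (1 : ℝ) / a (i + (k + 1))
  have hsum : Summable fun i => (1 : ℝ) / a i := by
    simpa using summable_div_of_abs_le ha hdouble hε
  have ht : 0 < t := ((summable_nat_add_iff (k + 1)).2 hsum).tsum_pos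
    (fun _ => by positivity) 0 (one_div_pos.2 (by exact_mod_cast ha _))
  have ht2 : t ≤ 2 / a (k + 1) := by
    have := abs_tsum_shift_le ha hdouble hε (k + 1)
    simp only [Int.cast_one, mul_one] at this
    exact (le_abs_self t).trans this
  have hk : (0 : ℝ) < a k := by exact_mod_cast ha k
  have hnt : n * t < 1 / (2 * a k) := by
    calc n * t ≤ n * (2 / a (k + 1)) := by gcongr
      _ < 1 / (2 * a k) := by
        rw [mul_div_assoc', div_lt_div_iff₀ (by exact_mod_cast ha _) (by positivity)]
        have : n * 2 * (2 * a k) < 1 * a (k + 1) := by linarith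
        exact_mod_cast this
  have hsplit : n * ∑' i, (1 : ℝ) / a i = ((n * z : ℤ) : ℝ) / a k + n * t := by
    have : ∑' i, (1 : ℝ) / a i = z / a k + t := by
      rw [div_add' _ _ _ hk.ne', eq_div_iff hk.ne']; linarith
    rw [this]; push_cast; ring
  rw [hsplit]
  refine lt_of_lt_of_le ?_ (sub_le_fract_neg_div_add _ (ha k) (by positivity))
  calc 1 / G ≤ 1 / (2 * a k) := one_div_le_one_div_of_le (by positivity) hG
    _ < 1 / a k - n * t := by
      linarith [show 1 / (a k : ℝ) = 1 / (2 * a k) + 1 / (2 * a k) by ring]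

end Lacunary

noncomputable def parityPoint (p : ℕ → ℕ) : Fin 2 → ℝ :=
  fun i => -∑' k, (1 : ℝ) / p (2 * k + i)

section Growth

variable {p : ℕ → ℕ} (hpos : ∀ j, 0 < p j) (hdvd : ∀ j, p j ∣ p (j + 1))
  (hgrowth : ∀ j, (j + 2) * p j ≤ p (j + 1))
include hpos hdvd hgrowth

omit hpos hdvd in
lemma two_mul_le_succ_of_growth (j : ℕ) : 2 * p j ≤ p (j + 1) :=
  (Nat.mul_le_mul_right _ (by omega)).trans (hgrowth j)

theorem eventually_tsum_shift_eq_zero_of_tsum_div_eq_rat {ε : ℕ → ℤ} {E : ℝ}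
    (hε : ∀ i, |(ε i : ℝ)| ≤ E) {x : ℚ} (hx : ∑' i, (ε i : ℝ) / p i = x) :
    ∀ᶠ k in atTop, ∑' i, (ε (i + (k + 1)) : ℝ) / p (i + (k + 1)) = 0 := by
  have hE : 0 ≤ E := (abs_nonneg _).trans (hε 0)
  obtain ⟨K, hK⟩ := exists_nat_gt (2 * x.den * E)
  filter_upwards [eventually_ge_atTop K] with k hk
  obtain ⟨z, hz⟩ :=
    exists_int_mul_tsum_eq hpos (two_mul_le_succ_of_growth hgrowth) hdvd hε k
  set t := ∑' i, (ε (i + (k + 1)) : ℝ) / p (i + (k + 1))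
  have hpk : (0 : ℝ) < p k := by exact_mod_cast hpos k
  have hnum : ((x.num : ℤ) : ℝ) = x * x.den := by exact_mod_cast (Rat.mul_den_eq_num x).symm
  have hint : (x.den * p k : ℝ) * t = ((x.num * p k - x.den * z : ℤ) : ℝ) := by
    push_cast
    linear_combination -(x.den : ℝ) * hz + (x.den * p k : ℝ) * hx - (p k : ℝ) * hnum
  have hratio : (p k : ℝ) / p (k + 1) ≤ 1 / (k + 2) := by
    rw [div_le_div_iff₀ (by exact_mod_cast hpos _) (by positivity)]
    linarith [show (k + 2) * (p k : ℝ) ≤ p (k + 1) by exact_mod_cast hgrowth k]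
  have hsmall : |(x.den * p k : ℝ) * t| < 1 := by
    rw [abs_mul, abs_of_pos (by positivity)]
    calc (x.den * p k : ℝ) * |t| ≤ x.den * p k * (2 * E / p (k + 1)) := by
          gcongr; exact abs_tsum_shift_le hpos (two_mul_le_succ_of_growth hgrowth) hε (k + 1)
      _ = 2 * x.den * E * (p k / p (k + 1)) := by ring
      _ ≤ 2 * x.den * E * (1 / (k + 2)) := mul_le_mul_of_nonneg_left hratio (by positivity)
      _ < 1 := by
          rw [mul_one_div, div_lt_one (by positivity)]
          linarith [show (K : ℝ) ≤ k by exact_mod_cast hk]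
  rw [hint] at hsmall
  have hzero : x.num * p k - x.den * z = 0 := Int.abs_lt_one_iff.1 (by exact_mod_cast hsmall)
  rw [hzero, Int.cast_zero] at hint
  exact (mul_eq_zero.1 hint).resolve_left (by positivity)

theorem eventually_eq_zero_of_tsum_div_eq_rat {ε : ℕ → ℤ} {E : ℝ}
    (hε : ∀ i, |(ε i : ℝ)| ≤ E) {x : ℚ} (hx : ∑' i, (ε i : ℝ) / p i = x) :
    ∀ᶠ i in atTop, ε i = 0 := by
  obtain ⟨K, hK⟩ := (eventually_tsum_shift_eq_zero_of_tsum_div_eq_rat hpos hdvd hgrowth hε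
    hx).exists_forall_of_atTop
  filter_upwards [eventually_gt_atTop K] with i hi
  obtain ⟨k, rfl⟩ : ∃ k, i = k + 1 := ⟨i - 1, by omega⟩
  have hstep := ((summable_nat_add_iff (k + 1)).2
    (summable_div_of_abs_le hpos (two_mul_le_succ_of_growth hgrowth) hε)).tsum_eq_zero_add
  have htail := hK (k + 1) (by omega)
  rw [hK k (by omega)] at hstep
  simp only [zero_add, Nat.add_right_comm _ 1 (k + 1), add_assoc] at hstep htail
  rw [htail, add_zero, eq_comm, div_eq_zero_iff] at hstep
  exact_mod_cast hstep.resolve_right (by exact_mod_cast (hpos _).ne')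

theorem parityPoint_rat_independent (q₀ q₁ q₂ : ℚ)
    (h : (q₀ : ℝ) + q₁ * parityPoint p 0 + q₂ * parityPoint p 1 = 0) :
    q₀ = 0 ∧ q₁ = 0 ∧ q₂ = 0 := by
  have hdouble := two_mul_le_succ_of_growth hgrowth
  set B : ℤ := q₁.num * q₂.den
  set C : ℤ := q₂.num * q₁.den
  set ε : ℕ → ℤ := fun i => if i % 2 = 0 then B else C
  have hε : ∀ i, |(ε i : ℝ)| ≤ |(B : ℝ)| + |(C : ℝ)| := fun i => by
    simp only [ε]; split_ifs <;> simp
  have hsum := summable_div_of_abs_le hpos hdouble hε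
  have hnum : ∀ q : ℚ, ((q.num : ℤ) : ℝ) = q * q.den :=
    fun q => by exact_mod_cast (Rat.mul_den_eq_num q).symm
  have hx : ∑' i, (ε i : ℝ) / p i = ((q₀ * q₁.den * q₂.den : ℚ) : ℝ) := by
    have hinj : Function.Injective (2 * · : ℕ → ℕ) := mul_right_injective₀ (two_ne_zero' ℕ)
    rw [← tsum_even_add_odd (f := fun i => (ε i : ℝ) / p i)
      (hsum.comp_injective hinj) (hsum.comp_injective ((add_left_injective 1).comp hinj))]
    simp only [parityPoint, Fin.val_zero, Fin.val_one, add_zero] at h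
    simp only [ε, Nat.mul_mod_right, Nat.mul_add_mod, Nat.one_mod, one_ne_zero, if_true,
      if_false]
    simp only [div_eq_mul_inv, one_mul, tsum_mul_left, B, C] at h ⊢
    push_cast
    rw [hnum, hnum]
    linear_combination -(q₁.den * q₂.den : ℝ) * h
  obtain ⟨K, hK⟩ :=
    (eventually_eq_zero_of_tsum_div_eq_rat hpos hdvd hgrowth hε hx).exists_forall_of_atTop
  have hB : B = 0 := by simpa [ε] using hK (2 * K) (by omega)
  have hC : C = 0 := by simpa [ε, Nat.mul_add_mod] using hK (2 * K + 1) (by omega)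
  have hq₁ : q₁ = 0 := by simpa [B] using hB
  have hq₂ : q₂ = 0 := by simpa [C] using hC
  subst hq₁ hq₂
  exact ⟨by simpa using h, rfl, rfl⟩

theorem exists_one_div_lt_fract_mul_parityPoint {j n : ℕ} (hn : 0 < n)
    (hnj : 4 * n * p j < p (j + 2)) {G : ℝ} (hG : 2 * p j ≤ G) :
    ∃ i, 1 / G < Int.fract (n * parityPoint p i) := by
  obtain ⟨i, k, rfl⟩ : ∃ (i : Fin 2) (k : ℕ), j = 2 * k + i :=
    ⟨⟨j % 2, j.mod_lt two_pos⟩, j / 2, (Nat.div_add_mod j 2).symm⟩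
  have hshift : ∀ k : ℕ, 2 * (k + 1) + i = 2 * k + i + 1 + 1 := fun k => by ring
  have hdouble := two_mul_le_succ_of_growth hgrowth
  refine ⟨i, ?_⟩
  rw [parityPoint, mul_neg]
  refine one_div_lt_fract_neg_mul_tsum (a := fun k => p (2 * k + i)) (fun _ => hpos _)
    (fun k => ?_) (fun k => ?_) hn (by simpa only [hshift] using hnj) hG
  · rw [hshift]
    linarith [hdouble (2 * k + i), hdouble (2 * k + i + 1)]
  · rw [hshift]
    exact (hdvd _).trans (hdvd _)

end Growth

lemma exists_index_of_gap {p X : ℕ → ℕ} (hpos : ∀ j, 0 < p j)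
    (hgrowth : ∀ j, (j + 2) * p j ≤ p (j + 1))
    (hgap : ∀ j, 4 * p j * X (p (j + 1)) < p (j + 2)) (n : ℕ) :
    ∃ j, (j = 0 ∨ X (p j) ≤ n) ∧ 4 * n * p j < p (j + 2) := by
  have hex : ∃ j, 4 * n * p j < p (j + 2) := by
    refine ⟨4 * n, ?_⟩
    have h1 := hgrowth (4 * n)
    have h2 := hgrowth (4 * n + 1)
    have h3 := hpos (4 * n)
    nlinarith
  refine ⟨Nat.find hex, ?_, Nat.find_spec hex⟩
  rcases h : Nat.find hex with _ | j
  · exact Or.inl rfl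
  · have hmin : ¬ 4 * n * p j < p (j + 2) := Nat.find_min hex (by omega)
    have := hgap j
    refine Or.inr (le_of_lt (Nat.lt_of_mul_lt_mul_left (a := 4 * p j) ?_))
    linarith [mul_right_comm 4 n (p j)]

/-- `X (p l) + 1` puts the next term past the threshold `X (p l)`, and the factor `l + 2` makes the
ratios of consecutive terms unbounded. -/
def thresholdSeq (X : ℕ → ℕ) : ℕ → ℕ
  | 0 => 1
  | l + 1 => 4 * (l + 2) * thresholdSeq X l * (X (thresholdSeq X l) + 1)

section thresholdSeq

variable (X : ℕ → ℕ)

lemma thresholdSeq_pos (l : ℕ) : 0 < thresholdSeq X l := by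
  induction l with
  | zero => simp [thresholdSeq]
  | succ l ih => simp only [thresholdSeq]; positivity

lemma thresholdSeq_dvd_succ (l : ℕ) : thresholdSeq X l ∣ thresholdSeq X (l + 1) :=
  ⟨4 * (l + 2) * (X (thresholdSeq X l) + 1), by simp only [thresholdSeq]; ring⟩

lemma thresholdSeq_growth (l : ℕ) : (l + 2) * thresholdSeq X l ≤ thresholdSeq X (l + 1) :=
  calc (l + 2) * thresholdSeq X l
      ≤ (l + 2) * thresholdSeq X l * (4 * (X (thresholdSeq X l) + 1)) :=
        Nat.le_mul_of_pos_right _ (by positivity)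
    _ = thresholdSeq X (l + 1) := by simp only [thresholdSeq]; ring

lemma thresholdSeq_gap (j : ℕ) :
    4 * thresholdSeq X j * X (thresholdSeq X (j + 1)) < thresholdSeq X (j + 2) := by
  have hle : thresholdSeq X j ≤ thresholdSeq X (j + 1) :=
    (Nat.le_mul_of_pos_left _ (by omega)).trans (thresholdSeq_growth X j)
  have hpos := thresholdSeq_pos X (j + 1)
  calc 4 * thresholdSeq X j * X (thresholdSeq X (j + 1))
      ≤ 4 * thresholdSeq X (j + 1) * X (thresholdSeq X (j + 1)) := by gcongr
    _ < 4 * thresholdSeq X (j + 1) * (X (thresholdSeq X (j + 1)) + 1) := by gcongr; omega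
    _ ≤ 4 * (j + 3) * thresholdSeq X (j + 1) * (X (thresholdSeq X (j + 1)) + 1) := by
        gcongr; omega
    _ = thresholdSeq X (j + 2) := rfl

end thresholdSeq

lemma div_lt_sub_of_lt_fract {n : ℕ} (hn : 0 < n) {x v c : ℝ} {z : ℤ} (hz : n * v = z)
    (hv : v ≤ x) (h : c < Int.fract (n * x)) : c / n < x - v := by
  have hn' : (0 : ℝ) < n := by exact_mod_cast hn
  have hfloor : (z : ℝ) ≤ ⌊(n : ℝ) * x⌋ :=
    Int.cast_le.2 (Int.le_floor.2 (hz ▸ mul_le_mul_of_nonneg_left hv hn'.le))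
  rw [div_lt_iff₀ hn']
  rw [Int.fract] at h
  linarith

lemma one_lt_norm_inv_norm_smul_sub {ι : Type*} [Fintype ι] {w e : ι → ℝ} {i : ι}
    (hw : w i < 0) (he : e i = 1) : 1 < ‖‖w‖⁻¹ • w - e‖ := by
  have hnorm : 0 < ‖w‖ := norm_pos_iff.2 fun h => by simp [h] at hw
  calc 1 < 1 - ‖w‖⁻¹ * w i := by linarith [mul_neg_of_pos_of_neg (inv_pos.2 hnorm) hw]
    _ ≤ |‖w‖⁻¹ * w i - e i| := by rw [he, abs_sub_comm]; exact le_abs_self _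
    _ ≤ ‖‖w‖⁻¹ • w - e‖ := by simpa using norm_le_pi_norm (‖w‖⁻¹ • w - e) i

theorem stmt_12_general (g : ℝ → ℝ)
    (hgtop : Filter.Tendsto g Filter.atTop Filter.atTop)
    (m : ℕ) (hm : 0 < m) (hgm : ∀ x : ℝ, (m : ℝ) ≤ x → 2 ≤ g x) :
    ∃ r : Fin 2 → ℝ,
      (∀ q₀ q₁ q₂ : ℚ, (q₀ : ℝ) + (q₁ : ℝ) * r 0 + (q₂ : ℝ) * r 1 = 0 →
        q₀ = 0 ∧ q₁ = 0 ∧ q₂ = 0) ∧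
      ∀ n : ℕ, m ≤ n → ∀ vn : Fin 2 → ℝ, (∀ i, ∃ z : ℤ, (n : ℝ) * vn i = (z : ℝ)) →
        (1 / ((n : ℝ) * g n) < ‖r - vn‖ ∨
          1 < ‖(‖r - vn‖)⁻¹ • (r - vn) - ![1, 1]‖) := by
  have hthreshold : ∀ Q : ℕ, ∃ N : ℕ, ∀ n : ℕ, N ≤ n → 2 * (Q : ℝ) ≤ g n := fun Q =>
    ((hgtop.comp tendsto_natCast_atTop_atTop).eventually_ge_atTop _).exists_forall_of_atTop
  choose X hX using hthreshold
  set p := thresholdSeq X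
  have hpos := thresholdSeq_pos X
  have hdvd := thresholdSeq_dvd_succ X
  have hgrowth := thresholdSeq_growth X
  refine ⟨parityPoint p, parityPoint_rat_independent hpos hdvd hgrowth, ?_⟩
  intro n hn vn hvn
  obtain ⟨j, hj, hnj⟩ := exists_index_of_gap hpos hgrowth (thresholdSeq_gap X) n
  have hG : 2 * (p j : ℝ) ≤ g n := by
    rcases hj with rfl | hj
    · simpa [p, thresholdSeq] using hgm n (by exact_mod_cast hn)
    · exact hX _ n hj
  obtain ⟨i, hi⟩ :=
    exists_one_div_lt_fract_mul_parityPoint hpos hdvd hgrowth (by omega) hnj hG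
  obtain ⟨z, hz⟩ := hvn i
  rcases le_or_gt (vn i) (parityPoint p i) with hle | hlt
  · left
    calc 1 / (n * g n) = 1 / g n / n := by rw [div_div, mul_comm]
      _ < parityPoint p i - vn i := div_lt_sub_of_lt_fract (by omega) hz hle hi
      _ ≤ ‖parityPoint p i - vn i‖ := Real.le_norm_self _
      _ ≤ ‖parityPoint p - vn‖ := norm_le_pi_norm (parityPoint p - vn) i
  · right
    exact one_lt_norm_inv_norm_smul_sub (i := i) (by simpa using hlt) (by fin_cases i <;> rfl)

/-- Example-Proposition 6.12 (`prop: optimum diophantine approximation`): the approximation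
part of Theorem 6.1 is optimal in dimension 2. The norm on `Fin 2 → ℝ` is the maximum norm. -/
theorem stmt_12 (g : ℝ → ℝ) (hgmono : MonotoneOn g (Set.Ici 0))
    (hgnonneg : ∀ x : ℝ, 0 ≤ x → 0 ≤ g x)
    (hgtop : Filter.Tendsto g Filter.atTop Filter.atTop)
    (m : ℕ) (hm : 0 < m) (hgm : ∀ x : ℝ, (m : ℝ) ≤ x → 2 ≤ g x) :
    ∃ r : Fin 2 → ℝ,
      (∀ q₀ q₁ q₂ : ℚ, (q₀ : ℝ) + (q₁ : ℝ) * r 0 + (q₂ : ℝ) * r 1 = 0 →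
        q₀ = 0 ∧ q₁ = 0 ∧ q₂ = 0) ∧
      ∀ n : ℕ, m ≤ n → ∀ vn : Fin 2 → ℝ, (∀ i, ∃ z : ℤ, (n : ℝ) * vn i = (z : ℝ)) →
        (1 / ((n : ℝ) * g n) < ‖r - vn‖ ∨
          1 < ‖(‖r - vn‖)⁻¹ • (r - vn) - ![1, 1]‖) :=
  stmt_12_general g hgtop m hm hgm
end

section
/- Let (dᵢ)_{i≥0} be a sequence of positive integers with d₀ = 3, dᵢ dividing d_{i+1}, and d_{i+1} > 2·dᵢ² for every i ≥ 0. Then the series Σ_{k≥0} 1/d_{4k} and Σ_{k≥0} 1/d_{4k+2} converge, and setting r₁ := 1 − Σ_{k≥0} 1/d_{4k} and r₂ := 1 − Σ_{k≥0} 1/d_{4k+2}, the real numbers 1, r₁, r₂ are linearly independent over ℚ; that is, if a, b, c are integers with a + b·r₁ + c·r₂ = 0, then a = b = c = 0. -/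
/-!
Put `eₙ = b, 0, c, 0, b, 0, c, 0, …`, so that a relation `a + b r₁ + c r₂ = 0` says that
`∑ eₙ / dₙ` is the integer `a + b + c`. Since `dₙ ∣ d_N` for `n ≤ N`, the number
`d_N (a + b + c - ∑_{n ≤ N} eₙ / dₙ)` is an integer. It is `d_N` times the tail of the series,
of size at most `2 B d_N / d_{N+1} < B / d_N` where `|eₙ| ≤ B`, so it vanishes for large `N`.
Hence the partial sums are eventually exactly `a + b + c`, which forces `eₙ = 0` for large `n`,
i.e. `b = c = 0`, and then `a = 0`.
-/

open Filter Finset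

section CantorSeries

variable {d : ℕ → ℕ}

theorem pos_of_dvd_of_two_mul_sq_lt (hdvd : ∀ n, d n ∣ d (n + 1))
    (hgrow : ∀ n, 2 * d n ^ 2 < d (n + 1)) (n : ℕ) : 0 < d n := by
  have hsucc : ∀ n, 0 < d (n + 1) := fun n => (Nat.zero_le _).trans_lt (hgrow n)
  cases n with
  | zero => exact Nat.pos_of_dvd_of_pos (hdvd 0) (hsucc 0)
  | succ n => exact hsucc n

theorem two_mul_le_succ_of_two_mul_sq_lt (hgrow : ∀ n, 2 * d n ^ 2 < d (n + 1)) (n : ℕ) :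
    2 * d n ≤ d (n + 1) :=
  (Nat.mul_le_mul_left 2 (Nat.le_self_pow two_ne_zero _)).trans (hgrow n).le

theorem dvd_of_le_of_dvd_succ (hdvd : ∀ n, d n ∣ d (n + 1)) {m n : ℕ} (hmn : m ≤ n) :
    d m ∣ d n := by
  induction n, hmn using Nat.le_induction with
  | base => exact dvd_rfl
  | succ n _ ih => exact ih.trans (hdvd n)

theorem two_pow_mul_le (hdouble : ∀ n, 2 * d n ≤ d (n + 1)) (n k : ℕ) :
    2 ^ k * d n ≤ d (k + n) := by
  induction k with
  | zero => simp
  | succ k ih =>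
    rw [pow_succ', mul_assoc, Nat.succ_add]
    exact (Nat.mul_le_mul_left 2 ih).trans (hdouble (k + n))

theorem abs_div_le_geometric_s13 (hpos : ∀ n, 0 < d n) (hdouble : ∀ n, 2 * d n ≤ d (n + 1))
    {x : ℕ → ℝ} {B : ℝ} (hx : ∀ n, |x n| ≤ B) (n k : ℕ) :
    |x (k + n) / d (k + n)| ≤ B / d n * (1 / 2) ^ k := by
  have hdn : (0 : ℝ) < d n := by exact_mod_cast hpos n
  have hle : (2 : ℝ) ^ k * d n ≤ d (k + n) := by exact_mod_cast two_pow_mul_le hdouble n k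
  calc |x (k + n) / d (k + n)| = |x (k + n)| / d (k + n) := by rw [abs_div, Nat.abs_cast]
    _ ≤ B / (2 ^ k * d n) :=
      div_le_div₀ ((abs_nonneg _).trans (hx 0)) (hx _) (by positivity) hle
    _ = B / d n * (1 / 2) ^ k := by rw [one_div_pow]; field_simp

theorem summable_div_of_abs_le_s13 (hpos : ∀ n, 0 < d n) (hdouble : ∀ n, 2 * d n ≤ d (n + 1))
    {x : ℕ → ℝ} {B : ℝ} (hx : ∀ n, |x n| ≤ B) : Summable fun n => x n / d n :=
  (summable_geometric_two.mul_left (B / d 0)).of_norm_bounded fun k => by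
    simpa only [add_zero, Real.norm_eq_abs] using abs_div_le_geometric_s13 hpos hdouble hx 0 k

theorem abs_tsum_tail_le (hpos : ∀ n, 0 < d n) (hdouble : ∀ n, 2 * d n ≤ d (n + 1))
    {x : ℕ → ℝ} {B : ℝ} (hx : ∀ n, |x n| ≤ B) (n : ℕ) :
    |∑' k, x (k + n) / d (k + n)| ≤ 2 * B / d n := by
  have := tsum_of_norm_bounded (hasSum_geometric_two.mul_left (B / d n))
    fun k => (Real.norm_eq_abs _).trans_le (abs_div_le_geometric_s13 hpos hdouble hx n k)
  rw [Real.norm_eq_abs] at this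
  exact this.trans_eq (by ring)

theorem exists_intCast_eq_mul_sum (hdvd : ∀ n, d n ∣ d (n + 1)) (hpos : ∀ n, 0 < d n)
    (e : ℕ → ℤ) (N : ℕ) : ∃ z : ℤ, (d N : ℝ) * ∑ n ∈ range (N + 1), (e n : ℝ) / d n = z := by
  refine ⟨∑ n ∈ range (N + 1), e n * (d N / d n : ℕ), ?_⟩
  rw [Int.cast_sum, mul_sum]
  refine sum_congr rfl fun n hn => ?_
  have hdn : (d n : ℝ) ≠ 0 := by exact_mod_cast (hpos n).ne'
  have hdvd' := dvd_of_le_of_dvd_succ hdvd (Nat.lt_succ_iff.mp (mem_range.mp hn))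
  rw [Int.cast_mul, Int.cast_natCast, Nat.cast_div hdvd' hdn]
  ring

theorem sum_range_eq_of_tsum_eq_intCast (hdvd : ∀ n, d n ∣ d (n + 1))
    (hgrow : ∀ n, 2 * d n ^ 2 < d (n + 1)) {e : ℕ → ℤ} {B : ℕ} (he : ∀ n, |e n| ≤ B) {m : ℤ}
    (hm : ∑' n, (e n : ℝ) / d n = m) {N : ℕ} (hN : B ≤ d N) :
    ∑ n ∈ range (N + 1), (e n : ℝ) / d n = m := by
  have hpos := pos_of_dvd_of_two_mul_sq_lt hdvd hgrow
  have hdouble := two_mul_le_succ_of_two_mul_sq_lt hgrow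
  have he' : ∀ n, |(e n : ℝ)| ≤ B := fun n => by exact_mod_cast he n
  set tail := ∑' k, (e (k + (N + 1)) : ℝ) / d (k + (N + 1))
  have hsplit : ∑ n ∈ range (N + 1), (e n : ℝ) / d n + tail = m :=
    hm ▸ (summable_div_of_abs_le_s13 hpos hdouble he').sum_add_tsum_nat_add (N + 1)
  obtain ⟨z, hz⟩ := exists_intCast_eq_mul_sum hdvd hpos e N
  have hint : (d N : ℝ) * tail = ((d N * m - z : ℤ) : ℝ) := by
    push_cast
    rw [← hz, ← hsplit]
    ring
  have hgap : (2 * B * d N : ℝ) < d (N + 1) := by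
    have := hgrow N
    exact_mod_cast (show 2 * B * d N < d (N + 1) by nlinarith)
  have hsmall : |(d N : ℝ) * tail| < 1 := by
    have hd1 : (0 : ℝ) < d (N + 1) := by exact_mod_cast hpos (N + 1)
    calc |(d N : ℝ) * tail| = d N * |tail| := by rw [abs_mul, Nat.abs_cast]
      _ ≤ d N * (2 * B / d (N + 1)) := by
        gcongr
        exact abs_tsum_tail_le hpos hdouble he' (N + 1)
      _ < 1 := by rw [mul_div_assoc', div_lt_one hd1]; linarith
  rw [hint, ← Int.cast_abs, ← Int.cast_one, Int.cast_lt, Int.abs_lt_one_iff] at hsmall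
  rw [hsmall, Int.cast_zero, mul_eq_zero] at hint
  have hdN : (d N : ℝ) ≠ 0 := by exact_mod_cast (hpos N).ne'
  linarith [hint.resolve_left hdN]

theorem eventually_eq_zero_of_tsum_eq_intCast (hdvd : ∀ n, d n ∣ d (n + 1))
    (hgrow : ∀ n, 2 * d n ^ 2 < d (n + 1)) {e : ℕ → ℤ} {B : ℕ} (he : ∀ n, |e n| ≤ B) {m : ℤ}
    (hm : ∑' n, (e n : ℝ) / d n = m) : ∀ᶠ n in atTop, e n = 0 := by
  have hpos := pos_of_dvd_of_two_mul_sq_lt hdvd hgrow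
  have hmono : StrictMono d := strictMono_nat_of_lt_succ fun n => by
    linarith [two_mul_le_succ_of_two_mul_sq_lt hgrow n, hpos n]
  obtain ⟨N, hN⟩ := eventually_atTop.mp (hmono.tendsto_atTop.eventually_ge_atTop B)
  refine eventually_atTop.mpr ⟨N + 1, fun n hn => ?_⟩
  obtain ⟨M, rfl⟩ : ∃ M, n = M + 1 := ⟨n - 1, by omega⟩
  have h := sum_range_succ (fun n => (e n : ℝ) / d n) (M + 1)
  rw [sum_range_eq_of_tsum_eq_intCast hdvd hgrow he hm (hN (M + 1) (by omega)),
    sum_range_eq_of_tsum_eq_intCast hdvd hgrow he hm (hN M (by omega)), left_eq_add,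
    div_eq_zero_iff, Int.cast_eq_zero] at h
  exact h.resolve_right (by exact_mod_cast (hpos _).ne')

end CantorSeries

theorem stmt_13_general (d : ℕ → ℕ)
    (hdvd : ∀ i, d i ∣ d (i + 1)) (hgrow : ∀ i, 2 * (d i) ^ 2 < d (i + 1)) :
    (Summable fun k : ℕ => (1 : ℝ) / (d (4 * k) : ℝ)) ∧
    (Summable fun k : ℕ => (1 : ℝ) / (d (4 * k + 2) : ℝ)) ∧
    (∀ a b c : ℤ,
      (a : ℝ) + (b : ℝ) * (1 - ∑' k : ℕ, (1 : ℝ) / (d (4 * k) : ℝ)) +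
        (c : ℝ) * (1 - ∑' k : ℕ, (1 : ℝ) / (d (4 * k + 2) : ℝ)) = 0 →
      a = 0 ∧ b = 0 ∧ c = 0) := by
  have hpos := pos_of_dvd_of_two_mul_sq_lt hdvd hgrow
  have hdouble := two_mul_le_succ_of_two_mul_sq_lt hgrow
  have hsum : Summable fun n => (1 : ℝ) / d n :=
    summable_div_of_abs_le_s13 hpos hdouble (x := 1) (B := 1) (by simp)
  refine ⟨hsum.comp_injective (mul_right_injective₀ four_ne_zero),
    hsum.comp_injective fun i j h => by simpa using h, fun a b c habc => ?_⟩
  set e : ℕ → ℤ := fun n => if n % 4 = 0 then b else if n % 4 = 2 then c else 0 with he_def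
  have he : ∀ n, |e n| ≤ (b.natAbs + c.natAbs : ℕ) := fun n => by
    push_cast [Int.natCast_natAbs]
    simp only [he_def]
    split_ifs <;> linarith [abs_nonneg b, abs_nonneg c, abs_zero (α := ℤ)]
  generalize b.natAbs + c.natAbs = B at he
  have hs : Summable fun n => (e n : ℝ) / d n :=
    summable_div_of_abs_le_s13 hpos hdouble (B := B) fun n => by exact_mod_cast he n
  have htsum : ∑' n, (e n : ℝ) / d n = (a + b + c : ℤ) := by
    rw [Nat.sumByResidueClasses hs 4]
    refine (Fin.sum_univ_four fun j : Fin 4 =>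
      ∑' m, (e (j.val + 4 * m) : ℝ) / d (j.val + 4 * m)).trans ?_
    simp [he_def, Nat.add_mul_mod_self_left, div_eq_mul_one_div (b : ℝ),
      div_eq_mul_one_div (c : ℝ), tsum_mul_left, add_comm 2]
    simp only [one_div] at habc
    linear_combination -habc
  obtain ⟨N, hN⟩ :=
    eventually_atTop.mp (eventually_eq_zero_of_tsum_eq_intCast hdvd hgrow he htsum)
  have hb : b = 0 := by simpa [he_def] using hN (4 * N) (by omega)
  have hc : c = 0 := by simpa [he_def, Nat.add_mod] using hN (4 * N + 2) (by omega)
  subst hb hc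
  exact ⟨by simpa using habc, rfl, rfl⟩

/-- Part (1) of Example-Proposition 6.12: for a sequence `dᵢ` with `d₀ = 3`, `dᵢ ∣ d_{i+1}`,
and `d_{i+1} > 2dᵢ²`, the series `Σ 1/d_{4k}` and `Σ 1/d_{4k+2}` converge, and with
`r₁ := 1 − Σ 1/d_{4k}` and `r₂ := 1 − Σ 1/d_{4k+2}` the reals `1, r₁, r₂` are
linearly independent over `ℚ`. -/
theorem stmt_13 (d : ℕ → ℕ) (hpos : ∀ i, 0 < d i) (hd0 : d 0 = 3)
    (hdvd : ∀ i, d i ∣ d (i + 1)) (hgrow : ∀ i, 2 * (d i) ^ 2 < d (i + 1)) :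
    (Summable fun k : ℕ => (1 : ℝ) / (d (4 * k) : ℝ)) ∧
    (Summable fun k : ℕ => (1 : ℝ) / (d (4 * k + 2) : ℝ)) ∧
    (∀ a b c : ℤ,
      (a : ℝ) + (b : ℝ) * (1 - ∑' k : ℕ, (1 : ℝ) / (d (4 * k) : ℝ)) +
        (c : ℝ) * (1 - ∑' k : ℕ, (1 : ℝ) / (d (4 * k + 2) : ℝ)) = 0 →
      a = 0 ∧ b = 0 ∧ c = 0) :=
  stmt_13_general d hdvd hgrow
end

section
/- Let g : [0,∞) → [0,∞) be a monotone nondecreasing function and m a positive integer with g(x) ≥ 2 for all x ≥ m. Let (dᵢ)_{i≥0} be a sequence of positive integers with d₀ = 3, dᵢ dividing d_{i+1}, g(d_{i+1}) > 2·dᵢ, and d_{i+1} > 2·dᵢ² for every i ≥ 0. Set r₁ := 1 − Σ_{k≥0} 1/d_{4k} and r₂ := 1 − Σ_{k≥0} 1/d_{4k+2} (both series converge). Then for every integer n ≥ m one has max({n·r₁}, {n·r₂}) > 1/g(n), where {x} denotes the fractional part of x. -/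
/-!
Write `T_j = ∑ₖ 1 / d (4k + j)`. Cutting `T_j` after the term `1 / d i` (with `i ≡ j mod 4`),
the divisibility chain turns the head into a fraction `P / d i`, so `n (1 - T_j)` is
`N / d i - n τ` modulo `1` with `N` an integer and `τ > 0` the remaining tail; hence its
fractional part is at least `1 / d i - n τ`. For `d (s + 1) ≤ n < d (s + 2)` take the even
`i ∈ {s - 1, s}`: the tail starts beyond `s + 2`, so the growth `d (t + 1) > 2 d t ^ 2` gives
`n τ < 1 / d (s + 2) ≤ 1 / (2 d s)`, and what is left exceeds
`1 / (2 d s) > 1 / g (d (s + 1)) ≥ 1 / g n`. For `n < d 1` the whole of `T_2` is such a tail,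
and `fract (n r₂) = 1 - n T_2 > 1 / 2`.
-/

open Finset

theorem one_div_sub_le_fract_intCast_div_sub (N : ℤ) {D : ℕ} (hD : 0 < D) {ε : ℝ}
    (hε : 0 < ε) :
    1 / D - ε ≤ Int.fract ((N : ℝ) / D - ε) := by
  set x := (N : ℝ) / D - ε
  have hDR : (0 : ℝ) < D := by exact_mod_cast hD
  have hlt : (D : ℝ) * ⌊x⌋ < N :=
    calc (D : ℝ) * ⌊x⌋ ≤ D * x := mul_le_mul_of_nonneg_left (Int.floor_le x) hDR.le
      _ = N - D * ε := by simp only [x]; field_simp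
      _ < N := by nlinarith
  -- `D ⌊x⌋ < N` is a strict inequality of integers, so it gains a full unit.
  have hfloor : (⌊x⌋ : ℝ) ≤ (N - 1) / D := by
    rw [le_div_iff₀ hDR, mul_comm]
    exact_mod_cast Int.le_sub_one_iff.2 (by exact_mod_cast hlt)
  calc 1 / D - ε = x - (N - 1) / D := by simp only [x]; field_simp; ring
    _ ≤ x - ⌊x⌋ := by linarith

theorem natCast_mul_sum_one_div_of_dvd {ι : Type*} {s : Finset ι} {f : ι → ℕ} {D : ℕ}
    (h : ∀ i ∈ s, f i ∣ D) :
    (D : ℝ) * ∑ i ∈ s, 1 / (f i : ℝ) = (∑ i ∈ s, D / f i : ℕ) := by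
  rw [mul_sum, Nat.cast_sum]
  exact sum_congr rfl fun i hi => by rw [Nat.cast_div_charZero (h i hi), mul_one_div]

theorem one_div_sub_le_fract_mul_one_sub_tsum {f : ℕ → ℕ} (hf : ∀ k, 0 < f k)
    (hs : Summable fun k => (1 : ℝ) / f k) {K D : ℕ} (hD : 0 < D) (hdvd : ∀ k < K, f k ∣ D)
    {n : ℕ} (hn : 0 < n) :
    1 / D - n * ∑' k, (1 : ℝ) / f (k + K)
      ≤ Int.fract (n * (1 - ∑' k, (1 : ℝ) / f k)) := by
  set τ := ∑' k, (1 : ℝ) / f (k + K)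
  have hsplit : ∑ k ∈ range K, (1 : ℝ) / f k + τ = ∑' k, (1 : ℝ) / f k :=
    hs.sum_add_tsum_nat_add K
  obtain ⟨P, hP⟩ : ∃ P : ℕ, (D : ℝ) * ∑ k ∈ range K, 1 / (f k : ℝ) = P :=
    ⟨_, natCast_mul_sum_one_div_of_dvd fun k hk => hdvd k (mem_range.1 hk)⟩
  have hτ : 0 < τ := ((summable_nat_add_iff K).2 hs).tsum_pos (fun _ => by positivity) 0
    (by have := hf (0 + K); positivity)
  have hDR : (0 : ℝ) < D := by exact_mod_cast hD
  have hrepr : (n : ℝ) * (1 - ∑' k, (1 : ℝ) / f k)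
      = ((n * D - n * P : ℤ) : ℝ) / D - n * τ := by
    rw [← hsplit]
    push_cast
    rw [← hP]
    field_simp
    ring
  rw [hrepr]
  exact one_div_sub_le_fract_intCast_div_sub _ hD (by positivity)

theorem pow_mul_le_of_two_mul_le {f : ℕ → ℝ} (h : ∀ k, 2 * f k ≤ f (k + 1)) (k : ℕ) :
    2 ^ k * f 0 ≤ f k := by
  induction k with
  | zero => simp
  | succ k ih => rw [pow_succ']; linarith [h k]

theorem one_div_le_of_two_mul_le {f : ℕ → ℝ} (h0 : 0 < f 0) (h : ∀ k, 2 * f k ≤ f (k + 1))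
    (k : ℕ) : 1 / f k ≤ 1 / f 0 * (1 / 2) ^ k := by
  rw [div_pow, one_pow, div_mul_div_comm, one_mul, mul_comm]
  exact one_div_le_one_div_of_le (by positivity) (pow_mul_le_of_two_mul_le h k)

theorem summable_one_div_of_two_mul_le {f : ℕ → ℝ} (h0 : 0 < f 0)
    (h : ∀ k, 2 * f k ≤ f (k + 1)) : Summable fun k => 1 / f k :=
  have hf : ∀ k, 0 < f k := fun k => (by positivity : (0 : ℝ) < 2 ^ k * f 0).trans_le
    (pow_mul_le_of_two_mul_le h k)
  (summable_geometric_two.mul_left _).of_nonneg_of_le (fun k => (one_div_pos.2 (hf k)).le)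
    (one_div_le_of_two_mul_le h0 h)

theorem tsum_one_div_le_of_two_mul_le {f : ℕ → ℝ} (h0 : 0 < f 0)
    (h : ∀ k, 2 * f k ≤ f (k + 1)) : ∑' k, 1 / f k ≤ 2 / f 0 :=
  calc ∑' k, 1 / f k ≤ ∑' k, 1 / f 0 * (1 / 2) ^ k :=
        (summable_one_div_of_two_mul_le h0 h).tsum_le_tsum (one_div_le_of_two_mul_le h0 h)
          (summable_geometric_two.mul_left _)
    _ = 2 / f 0 := by rw [tsum_mul_left, tsum_geometric_two]; ring

theorem StrictMono.exists_le_and_lt_succ {f : ℕ → ℕ} (hf : StrictMono f) {n : ℕ}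
    (hn : f 0 ≤ n) :
    ∃ s, f s ≤ n ∧ n < f (s + 1) := by
  by_contra! h
  have hle : ∀ s, f s ≤ n := fun s => Nat.rec hn (fun s ih => h s ih) s
  exact absurd ((hf.id_le (n + 1)).trans (hle (n + 1))) (by simp)

namespace RapidDivisibilityChain

variable {d : ℕ → ℕ}

theorem two_mul_le_succ (hpos : ∀ i, 0 < d i) (hgrow : ∀ i, 2 * d i ^ 2 < d (i + 1)) (i : ℕ) :
    2 * d i ≤ d (i + 1) := by
  nlinarith [hpos i, hgrow i]

theorem strictMono (hpos : ∀ i, 0 < d i) (hgrow : ∀ i, 2 * d i ^ 2 < d (i + 1)) :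
    StrictMono d :=
  strictMono_nat_of_lt_succ fun i => by linarith [hpos i, two_mul_le_succ hpos hgrow i]

theorem dvd_of_le (hdvd : ∀ i, d i ∣ d (i + 1)) {a b : ℕ} (hab : a ≤ b) : d a ∣ d b :=
  Nat.rel_of_forall_rel_succ_of_le (· ∣ ·) hdvd hab

theorem two_mul_le_step_four (hpos : ∀ i, 0 < d i) (hgrow : ∀ i, 2 * d i ^ 2 < d (i + 1))
    (i k : ℕ) : 2 * (d (4 * k + i) : ℝ) ≤ d (4 * (k + 1) + i) := by
  have hstep := two_mul_le_succ hpos hgrow (4 * k + i)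
  have hmono := (strictMono hpos hgrow).monotone (show 4 * k + i + 1 ≤ 4 * (k + 1) + i by omega)
  exact_mod_cast hstep.trans hmono

theorem summable_step_four (hpos : ∀ i, 0 < d i) (hgrow : ∀ i, 2 * d i ^ 2 < d (i + 1))
    (i : ℕ) : Summable fun k => (1 : ℝ) / d (4 * k + i) :=
  summable_one_div_of_two_mul_le (by simpa using hpos i) (two_mul_le_step_four hpos hgrow i)

theorem natCast_mul_tsum_lt (hpos : ∀ i, 0 < d i) (hgrow : ∀ i, 2 * d i ^ 2 < d (i + 1))
    {n t i : ℕ} (hn : n < d t) (hti : t < i) :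
    n * ∑' k, (1 : ℝ) / d (4 * k + i) < 1 / d t := by
  have htail : ∑' k, (1 : ℝ) / d (4 * k + i) ≤ 2 / d i := by
    simpa using tsum_one_div_le_of_two_mul_le (by simpa using hpos i)
      (two_mul_le_step_four hpos hgrow i)
  have hti' : 2 * n * d t < d i := calc
    2 * n * d t < 2 * d t ^ 2 := by nlinarith [hpos t]
    _ < d (t + 1) := hgrow t
    _ ≤ d i := (strictMono hpos hgrow).monotone hti
  have hdt : (0 : ℝ) < d t := by exact_mod_cast hpos t
  have hdi : (0 : ℝ) < d i := by exact_mod_cast hpos i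
  calc n * ∑' k, (1 : ℝ) / d (4 * k + i) ≤ n * (2 / d i) := by gcongr
    _ < 1 / d t := by
      rw [mul_div_assoc', div_lt_div_iff₀ hdi hdt]
      have : ((2 * n * d t : ℕ) : ℝ) < d i := by exact_mod_cast hti'
      push_cast at this
      linarith

theorem one_div_sub_le_fract (hpos : ∀ i, 0 < d i) (hdvd : ∀ i, d i ∣ d (i + 1))
    (hgrow : ∀ i, 2 * d i ^ 2 < d (i + 1)) (j K : ℕ) {n : ℕ} (hn : 0 < n) :
    1 / d (4 * K + j) - n * ∑' k, (1 : ℝ) / d (4 * k + (4 * K + j + 4))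
      ≤ Int.fract (n * (1 - ∑' k, (1 : ℝ) / d (4 * k + j))) := by
  have h := one_div_sub_le_fract_mul_one_sub_tsum (f := fun k => d (4 * k + j)) (fun _ => hpos _)
    (summable_step_four hpos hgrow j) (K := K + 1) (D := d (4 * K + j)) (hpos _)
    (fun k hk => dvd_of_le hdvd (by omega)) hn
  convert h using 5 with k
  rw [show 4 * (k + (K + 1)) + j = 4 * k + (4 * K + j + 4) by ring]

theorem one_div_sub_le_max_fract (hpos : ∀ i, 0 < d i) (hdvd : ∀ i, d i ∣ d (i + 1))
    (hgrow : ∀ i, 2 * d i ^ 2 < d (i + 1)) {i n : ℕ} (hi : Even i) (hn : 0 < n) :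
    1 / d i - n * ∑' k, (1 : ℝ) / d (4 * k + (i + 4))
      ≤ max (Int.fract (n * (1 - ∑' k, (1 : ℝ) / d (4 * k))))
          (Int.fract (n * (1 - ∑' k, (1 : ℝ) / d (4 * k + 2)))) := by
  obtain ⟨K, rfl | rfl⟩ : ∃ K, i = 4 * K + 0 ∨ i = 4 * K + 2 := by
    obtain ⟨r, rfl⟩ := hi; exact ⟨r / 2, by omega⟩
  · exact (one_div_sub_le_fract hpos hdvd hgrow 0 K hn).trans (le_max_left _ _)
  · exact (one_div_sub_le_fract hpos hdvd hgrow 2 K hn).trans (le_max_right _ _)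

theorem half_lt_fract (hpos : ∀ i, 0 < d i) (hgrow : ∀ i, 2 * d i ^ 2 < d (i + 1)) {n : ℕ}
    (hn0 : 0 < n) (hn : n < d 1) :
    1 / 2 < Int.fract (n * (1 - ∑' k, (1 : ℝ) / d (4 * k + 2))) := by
  have hd1 : (2 : ℝ) ≤ d 1 := by
    exact_mod_cast (two_mul_le_succ hpos hgrow 0).trans' (by linarith [hpos 0])
  have htail := natCast_mul_tsum_lt hpos hgrow hn (i := 2) one_lt_two
  -- the whole series is a tail, with an empty head over the denominator `1`
  calc 1 / 2 ≤ 1 - 1 / (d 1 : ℝ) := by rw [le_sub_comm, div_le_iff₀ (by linarith)]; linarith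
    _ < 1 / ((1 : ℕ) : ℝ) - n * ∑' k, (1 : ℝ) / d (4 * k + 2) := by push_cast; linarith
    _ ≤ _ := one_div_sub_le_fract_mul_one_sub_tsum (fun _ => hpos _)
        (summable_step_four hpos hgrow 2) (K := 0) one_pos
        (fun k hk => absurd hk k.not_lt_zero) hn0

theorem one_div_two_mul_lt_max_fract (hpos : ∀ i, 0 < d i) (hdvd : ∀ i, d i ∣ d (i + 1))
    (hgrow : ∀ i, 2 * d i ^ 2 < d (i + 1)) {n s : ℕ} (hn0 : 0 < n) (hn : n < d (s + 2)) :
    1 / (2 * d s : ℝ)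
      < max (Int.fract (n * (1 - ∑' k, (1 : ℝ) / d (4 * k))))
          (Int.fract (n * (1 - ∑' k, (1 : ℝ) / d (4 * k + 2)))) := by
  have hdmono := (strictMono hpos hgrow).monotone
  obtain ⟨i, hi, his, hsi⟩ : ∃ i, Even i ∧ i ≤ s ∧ s ≤ i + 1 :=
    ⟨2 * (s / 2), even_two_mul _, by omega, by omega⟩
  have hds : (0 : ℝ) < d s := by exact_mod_cast hpos s
  have hds2 : 2 * (d s : ℝ) ≤ d (s + 2) := by
    exact_mod_cast (Nat.mul_le_mul_left 2 (hdmono s.le_succ)).trans (two_mul_le_succ hpos hgrow _)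
  have hdi : 1 / (d s : ℝ) ≤ 1 / d i :=
    one_div_le_one_div_of_le (by exact_mod_cast hpos i) (by exact_mod_cast hdmono his)
  have htail := natCast_mul_tsum_lt hpos hgrow hn (i := i + 4) (by omega)
  calc 1 / (2 * d s : ℝ) = 1 / d s - 1 / (2 * d s) := by field_simp; ring
    _ ≤ 1 / d s - 1 / d (s + 2) := by gcongr
    _ < 1 / d i - n * ∑' k, (1 : ℝ) / d (4 * k + (i + 4)) := by linarith
    _ ≤ _ := one_div_sub_le_max_fract hpos hdvd hgrow hi hn0

end RapidDivisibilityChain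

open RapidDivisibilityChain

theorem stmt_14_general (g : ℝ → ℝ) (hgmono : MonotoneOn g (Set.Ici 0))
    (m : ℕ) (hm : 0 < m) (hgm : ∀ x : ℝ, (m : ℝ) ≤ x → 2 ≤ g x)
    (d : ℕ → ℕ) (hpos : ∀ i, 0 < d i)
    (hdvd : ∀ i, d i ∣ d (i + 1))
    (hgd : ∀ i, 2 * (d i : ℝ) < g (d (i + 1)))
    (hgrow : ∀ i, 2 * (d i) ^ 2 < d (i + 1)) :
    ∀ n : ℕ, m ≤ n →
      1 / g n < max (Int.fract ((n : ℝ) * (1 - ∑' k : ℕ, (1 : ℝ) / (d (4 * k) : ℝ))))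
        (Int.fract ((n : ℝ) * (1 - ∑' k : ℕ, (1 : ℝ) / (d (4 * k + 2) : ℝ)))) := by
  intro n hn
  have hn0 : 0 < n := hm.trans_le hn
  by_cases hsmall : n < d 1
  · calc 1 / g n ≤ 1 / 2 := one_div_le_one_div_of_le two_pos (hgm n (by exact_mod_cast hn))
      _ < _ := half_lt_fract hpos hgrow hn0 hsmall
      _ ≤ _ := le_max_right _ _
  · obtain ⟨s, hs1, hs2⟩ : ∃ s, d (s + 1) ≤ n ∧ n < d (s + 2) :=
      ((strictMono hpos hgrow).comp (strictMono_id.add_const 1)).exists_le_and_lt_succ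
        (not_lt.1 hsmall)
    have hgs : 2 * (d s : ℝ) < g n :=
      (hgd s).trans_le (hgmono (by simp) (by simp) (by exact_mod_cast hs1))
    calc 1 / g n < 1 / (2 * d s) := one_div_lt_one_div_of_lt (by simpa using hpos s) hgs
      _ < _ := one_div_two_mul_lt_max_fract hpos hdvd hgrow hn0 hs2

/-- Part (2) of Example-Proposition 6.12: with `r₁ := 1 − Σ 1/d_{4k}` and
`r₂ := 1 − Σ 1/d_{4k+2}` built from a sequence `dᵢ` with `d₀ = 3`, `dᵢ ∣ d_{i+1}`,
`g(d_{i+1}) > 2dᵢ` and `d_{i+1} > 2dᵢ²`, every integer `n ≥ m` satisfies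
`max({n r₁}, {n r₂}) > 1/g(n)`. -/
theorem stmt_14 (g : ℝ → ℝ) (hgmono : MonotoneOn g (Set.Ici 0))
    (hgnonneg : ∀ x : ℝ, 0 ≤ x → 0 ≤ g x)
    (m : ℕ) (hm : 0 < m) (hgm : ∀ x : ℝ, (m : ℝ) ≤ x → 2 ≤ g x)
    (d : ℕ → ℕ) (hpos : ∀ i, 0 < d i) (hd0 : d 0 = 3)
    (hdvd : ∀ i, d i ∣ d (i + 1))
    (hgd : ∀ i, 2 * (d i : ℝ) < g (d (i + 1)))
    (hgrow : ∀ i, 2 * (d i) ^ 2 < d (i + 1)) :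
    ∀ n : ℕ, m ≤ n →
      1 / g n < max (Int.fract ((n : ℝ) * (1 - ∑' k : ℕ, (1 : ℝ) / (d (4 * k) : ℝ))))
        (Int.fract ((n : ℝ) * (1 - ∑' k : ℕ, (1 : ℝ) / (d (4 * k + 2) : ℝ)))) :=
  stmt_14_general g hgmono m hm hgm d hpos hdvd hgd hgrow
end

section
/- Let (a_k)_{k≥1} be a monotone nondecreasing sequence of real numbers and (b_k)_{k≥1} a sequence of real numbers such that b_k < a_k for every k and lim_{k→∞} (a_k − b_k) = 0. Then (b_k) admits a strictly increasing subsequence; that is, there exists a strictly increasing function φ : ℕ → ℕ such that the sequence (b_{φ(k)})_{k≥1} is strictly increasing. -/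
open Filter Topology

theorem exists_strictMono_subseq_of_forall_exists_gt_lt {α : Type*} [Preorder α] {u : ℕ → α}
    (h : ∀ n, ∃ m, n < m ∧ u n < u m) : ∃ φ : ℕ → ℕ, StrictMono φ ∧ StrictMono (u ∘ φ) := by
  choose next lt_next u_lt_next using h
  refine ⟨fun k => next^[k] 0, strictMono_nat_of_lt_succ fun k => ?_,
    strictMono_nat_of_lt_succ fun k => ?_⟩
  · simpa only [Function.iterate_succ_apply'] using lt_next _
  · simpa only [Function.comp_apply, Function.iterate_succ_apply'] using u_lt_next _

section OrderedGroup

variable {α : Type*} [AddCommGroup α] [LinearOrder α] [IsOrderedAddMonoid α]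
  [TopologicalSpace α] [OrderTopology α]

theorem Monotone.eventually_lt_of_tendsto_sub_zero {a b : ℕ → α} (ha : Monotone a)
    (hlt : ∀ k, b k < a k) (hlim : Tendsto (fun k => a k - b k) atTop (𝓝 0)) (n : ℕ) :
    ∀ᶠ m in atTop, b n < b m := by
  have gap_small : ∀ᶠ m in atTop, a m - b m < a n - b n :=
    hlim.eventually (gt_mem_nhds (sub_pos.2 (hlt n)))
  filter_upwards [gap_small, eventually_ge_atTop n] with m hgap hnm
  have : a n - b m < a n - b n := (sub_le_sub_right (ha hnm) _).trans_lt hgap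
  exact (sub_lt_sub_iff_left _).1 this

end OrderedGroup

/-- Lemma 5.7 (`lem: strictly increasing seq b_k`): if `(a_k)` is monotone nondecreasing,
`b_k < a_k` for all `k`, and `a_k − b_k → 0`, then `(b_k)` has a strictly increasing
subsequence. -/
theorem stmt_15 (a b : ℕ → ℝ) (ha : Monotone a) (hlt : ∀ k, b k < a k)
    (hlim : Filter.Tendsto (fun k => a k - b k) Filter.atTop (nhds 0)) :
    ∃ φ : ℕ → ℕ, StrictMono φ ∧ StrictMono (b ∘ φ) :=
  exists_strictMono_subseq_of_forall_exists_gt_lt fun n =>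
    ((eventually_gt_atTop n).and (ha.eventually_lt_of_tendsto_sub_zero hlt hlim n)).exists
end
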